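/- arXiv:1809.10997 — 7 statements merged into one kernel-verified Lean document; each statement's English description precedes it below -/
import Mathlib

section
/- Let β_1,…,β_m be elements of a field of characteristic zero, let l_1,…,l_m be positive integers, L = l_1 + … + l_m, and define σ_0,…,σ_L by Π_{j=1}^m (β_j − w)^{l_j} = Σ_{i=0}^L σ_i w^i. Then for every j ∈ {1,…,m} and every k ∈ {0,1,…,l_j − 1}, one has Σ_{i=0}^L σ_i · i^k · β_j^i = 0. -/
/-!
The `σ i` are the coefficients of `P = ∏ j, (β j - X) ^ l j`, so multiplying the `i`-th one by
`i ^ k` is applying `k` times the Euler operator `θ = X · d/dX`, and the sum in question is the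
value of `θ^[k] P` at `β j`. Each application of `θ` lowers the power of `β j - X` dividing a
polynomial by at most one, so `(β j - X) ^ (l j - k)` still divides `θ^[k] P`, which therefore
vanishes at `β j` when `k < l j`.
-/

open Polynomial Finset

namespace Polynomial

variable {R : Type*} [CommSemiring R]

noncomputable def eulerDeriv (p : R[X]) : R[X] := X * derivative p

theorem coeff_eulerDeriv (p : R[X]) (i : ℕ) : (eulerDeriv p).coeff i = i * p.coeff i := by
  cases i with
  | zero => simp [eulerDeriv]
  | succ n =>
    rw [eulerDeriv, coeff_X_mul, coeff_derivative, mul_comm, Nat.cast_succ]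

theorem coeff_iterate_eulerDeriv (p : R[X]) (k i : ℕ) :
    (eulerDeriv^[k] p).coeff i = (i : R) ^ k * p.coeff i := by
  induction k with
  | zero => simp
  | succ k ih => rw [Function.iterate_succ_apply', coeff_eulerDeriv, ih, pow_succ', mul_assoc]

theorem natDegree_iterate_eulerDeriv_le (p : R[X]) (k : ℕ) :
    (eulerDeriv^[k] p).natDegree ≤ p.natDegree :=
  natDegree_le_iff_coeff_eq_zero.mpr fun i hi => by
    rw [coeff_iterate_eulerDeriv, coeff_eq_zero_of_natDegree_lt hi, mul_zero]

theorem pow_sub_one_dvd_eulerDeriv_of_pow_dvd {p q : R[X]} {n : ℕ} (h : q ^ n ∣ p) :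
    q ^ (n - 1) ∣ eulerDeriv p :=
  (pow_sub_one_dvd_derivative_of_pow_dvd h).mul_left X

theorem pow_sub_dvd_iterate_eulerDeriv_of_pow_dvd {p q : R[X]} {n : ℕ} (k : ℕ)
    (h : q ^ n ∣ p) : q ^ (n - k) ∣ eulerDeriv^[k] p := by
  induction k with
  | zero => simpa
  | succ k ih =>
    rw [Nat.sub_succ, Function.iterate_succ_apply']
    exact pow_sub_one_dvd_eulerDeriv_of_pow_dvd ih

theorem eval_iterate_eulerDeriv_eq_zero_of_pow_dvd {p q : R[X]} {n k : ℕ} {b : R}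
    (hq : q.IsRoot b) (h : q ^ n ∣ p) (hk : k < n) : (eulerDeriv^[k] p).eval b = 0 := by
  obtain ⟨r, hr⟩ := pow_sub_dvd_iterate_eulerDeriv_of_pow_dvd k h
  rw [hr, eval_mul, eval_pow, hq.eq_zero, zero_pow (Nat.sub_ne_zero_of_lt hk), zero_mul]

theorem sum_range_coeff_mul_pow_mul_pow {p : R[X]} {N : ℕ} (hN : p.natDegree < N) (k : ℕ)
    (x : R) : ∑ i ∈ range N, p.coeff i * (i : R) ^ k * x ^ i = (eulerDeriv^[k] p).eval x := by
  rw [eval_eq_sum_range' ((natDegree_iterate_eulerDeriv_le p k).trans_lt hN)]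
  simp only [coeff_iterate_eulerDeriv, mul_comm (p.coeff _)]

end Polynomial

theorem natDegree_prod_C_sub_X_pow_le {R ι : Type*} [CommRing R] (s : Finset ι) (β : ι → R)
    (l : ι → ℕ) : (∏ j ∈ s, (C (β j) - X) ^ l j).natDegree ≤ ∑ j ∈ s, l j := by
  have hlin (b : R) : (C b - X).natDegree ≤ 1 :=
    (natDegree_sub_le _ _).trans (by simp [natDegree_X_le])
  refine (natDegree_prod_le _ _).trans (sum_le_sum fun j _ => ?_)
  exact (natDegree_pow_le_of_le _ (hlin (β j))).trans_eq (mul_one _)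

theorem sigma_power_sum_eq_zero_general {F : Type*} [Field F]
    {m : ℕ} (β : Fin m → F) (l : Fin m → ℕ)
    (L : ℕ) (hL : L = ∑ j, l j)
    (σ : ℕ → F)
    (hσ : ∀ i, σ i = (∏ j, (C (β j) - X) ^ (l j)).coeff i)
    (j : Fin m) (k : ℕ) (hk : k < l j) :
    ∑ i ∈ range (L + 1), σ i * (i : F) ^ k * (β j) ^ i = 0 := by
  have hdeg : (∏ j, (C (β j) - X) ^ (l j)).natDegree < L + 1 :=
    Nat.lt_succ_of_le (hL ▸ natDegree_prod_C_sub_X_pow_le _ β l)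
  simp only [hσ]
  rw [sum_range_coeff_mul_pow_mul_pow hdeg]
  exact eval_iterate_eulerDeriv_eq_zero_of_pow_dvd (by simp) (dvd_prod_of_mem _ (mem_univ j)) hk

/-- Let `β₁,…,β_m` be elements of a field of characteristic zero,
`l₁,…,l_m` positive integers, `L = l₁ + … + l_m`, and define `σ₀,…,σ_L` by
`∏ j, (β j − w)^(l j) = ∑ i, σ i * w^i`.  Then for every `j` and every
`k ∈ {0,…,l j − 1}` one has `∑_{i=0}^{L} σ i * i^k * (β j)^i = 0`. -/
theorem sigma_power_sum_eq_zero {F : Type*} [Field F] [CharZero F]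
    {m : ℕ} (β : Fin m → F) (l : Fin m → ℕ) (hl : ∀ j, 1 ≤ l j)
    (L : ℕ) (hL : L = ∑ j, l j)
    (σ : ℕ → F)
    (hσ : ∀ i, σ i = (∏ j, (C (β j) - X) ^ (l j)).coeff i)
    (j : Fin m) (k : ℕ) (hk : k < l j) :
    ∑ i ∈ range (L + 1), σ i * (i : F) ^ k * (β j) ^ i = 0 :=
  sigma_power_sum_eq_zero_general β l L hL σ hσ j k hk
end

section
/- Let K be a field of characteristic zero and let α_1,…,α_m ∈ K be pairwise distinct and nonzero. For l ≥ 1 and μ ∈ {0,1,…,m}, let B_{l,μ,0}(t),…,B_{l,μ,m}(t) be the Padé polynomials for Euler's series at α_1,…,α_m. Then the (m+1)×(m+1) determinant Δ(t) = det( B_{l,μ,j}(t) )_{0≤μ≤m, 0≤j≤m} is a nonzero polynomial; more precisely Δ(t) = b·t^{m(m+1)l + m(m−1)/2} for some nonzero constant b ∈ K. -/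
/-!
Subtracting `F(αⱼ t) · B_{l,μ,0}` (Euler's series truncated high enough) from the `j`-th column
leaves the determinant unchanged and replaces `B_{l,μ,j}` by `-S_{l,μ,j}`. This remainder is
divisible by `t ^ ((m + 1) l + μ)`: its coefficient of `t ^ (m l + μ + r)` is, up to a factor,
the `r`-th derivative of `w ^ (μ + r) ∏ₖ (αₖ - w) ^ l` at `αⱼ`, which vanishes for `r < l`
because `αⱼ` is an `l`-fold root. Expanding along the first column, every term is then divisible
by `t ^ D`, `D = m (m + 1) l + m (m - 1) / 2`, and only the last row contributes to the
coefficient of `t ^ D`: it is `± σ_{ml}` times a Vandermonde determinant in the `αⱼ` with nonzero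
row and column factors. Counting degrees gives `deg Δ ≤ D`, so `Δ = b t ^ D` with `b ≠ 0`.
-/

open Polynomial Finset Nat

namespace Polynomial

variable {R : Type*} [CommRing R]

theorem coeff_sum_range_C_mul_X_pow (c : ℕ → R) (n d : ℕ) :
    (∑ i ∈ range n, C (c i) * X ^ i).coeff d = if d < n then c d else 0 := by
  simp [finsetSum_coeff]

theorem coeff_sum_range_C_mul_X_pow_sub (c : ℕ → R) (n d : ℕ) :
    (∑ i ∈ range (n + 1), C (c i) * X ^ (n - i)).coeff d =
      if d ≤ n then c (n - d) else 0 := by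
  have reflect : ∑ i ∈ range (n + 1), C (c i) * X ^ (n - i) =
      ∑ i ∈ range (n + 1), C (c (n - i)) * X ^ i := by
    rw [← sum_range_reflect]
    refine sum_congr rfl fun i hi => ?_
    rw [mem_range] at hi
    rw [Nat.add_sub_cancel, Nat.sub_sub_self (by omega)]
  simp only [reflect, coeff_sum_range_C_mul_X_pow, Nat.lt_succ_iff]

theorem eq_C_mul_X_pow_of_X_pow_dvd {p : R[X]} {n : ℕ} (hdvd : X ^ n ∣ p)
    (hdeg : p.natDegree ≤ n) : p = C (p.coeff n) * X ^ n := by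
  ext d
  rw [coeff_C_mul_X_pow]
  split_ifs with h
  · rw [h]
  · rcases lt_or_gt_of_ne h with h | h
    · exact X_pow_dvd_iff.mp hdvd d h
    · exact coeff_eq_zero_of_natDegree_lt (hdeg.trans_lt h)

theorem eval_iterate_derivative_of_X_sub_C_pow_dvd {p : R[X]} {a : R} {l r : ℕ}
    (hp : (X - C a) ^ l ∣ p) (hr : r < l) : (derivative^[r] p).eval a = 0 :=
  dvd_iff_isRoot.mp <| (dvd_pow_self _ (Nat.sub_ne_zero_of_lt hr)).trans
    (pow_sub_dvd_iterate_derivative_of_pow_dvd r hp)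

theorem eval_iterate_derivative_X_sub_C_pow_mul (a : R) (l : ℕ) (q : R[X]) :
    (derivative^[l] ((X - C a) ^ l * q)).eval a = l ! * q.eval a := by
  rw [iterate_derivative_mul, eval_finsetSum, sum_range_succ', sum_eq_zero fun k hk => ?_]
  · simp [iterate_derivative_X_sub_pow_self]
  · rw [mem_range] at hk
    simp [iterate_derivative_X_sub_pow, Nat.sub_sub_self (by omega : k + 1 ≤ l)]

theorem eval_iterate_derivative_X_pow_mul (p : R[X]) (a : R) (s r : ℕ) {n : ℕ}
    (hn : p.natDegree < n) :
    (derivative^[r] (X ^ (s + r) * p)).eval a =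
      ∑ i ∈ range n, p.coeff i * ((i + s + r).descFactorial r : R) * a ^ (i + s) := by
  conv_lhs => rw [p.as_sum_range' n hn, mul_sum, iterate_derivative_sum, eval_finsetSum]
  refine sum_congr rfl fun i _ => ?_
  rw [← C_mul_X_pow_eq_monomial, mul_left_comm, ← pow_add, iterate_derivative_C_mul,
    iterate_derivative_X_pow_eq_smul, show s + r + i - r = i + s by omega, eval_mul, eval_C,
    eval_smul, eval_pow, eval_X, smul_eq_mul, show s + r + i = i + s + r by ring]
  ring

section ProdCSubXPow

variable {m : ℕ}

theorem natDegree_C_sub_X_le (a : R) : (C a - X).natDegree ≤ 1 :=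
  (natDegree_sub_le _ _).trans (by rw [natDegree_C]; exact max_le (zero_le _) natDegree_X_le)

theorem natDegree_C_sub_X_pow_le (a : R) (l : ℕ) : ((C a - X) ^ l).natDegree ≤ l := by
  simpa using natDegree_pow_le_of_le l (natDegree_C_sub_X_le a)

theorem natDegree_prod_C_sub_X_pow_le (α : Fin m → R) (l : ℕ) :
    (∏ k, (C (α k) - X) ^ l).natDegree ≤ m * l := by
  refine (natDegree_prod_le _ _).trans ?_
  simpa using sum_le_sum fun k (_ : k ∈ univ) => natDegree_C_sub_X_pow_le (α k) l

theorem coeff_prod_C_sub_X_pow (α : Fin m → R) (l : ℕ) :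
    (∏ k, (C (α k) - X) ^ l).coeff (m * l) = (-1) ^ (m * l) := by
  have hcoeff (a : R) : ((C a - X) ^ l).coeff l = (-1) ^ l := by
    simpa using coeff_pow_of_natDegree_le (m := l) (natDegree_C_sub_X_le a)
  simpa [hcoeff, pow_mul'] using
    coeff_prod_of_natDegree_le univ _ l fun k _ => natDegree_C_sub_X_pow_le (α k) l

theorem exists_prod_C_sub_X_pow_eq_X_sub_C_pow_mul [IsDomain R] {α : Fin m → R}
    (hα : Function.Injective α) (l : ℕ) (j : Fin m) :
    ∃ q : R[X], ∏ k, (C (α k) - X) ^ l = (X - C (α j)) ^ l * q ∧ q.eval (α j) ≠ 0 := by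
  refine ⟨(-1) ^ l * ∏ k ∈ univ.erase j, (C (α k) - X) ^ l, ?_, ?_⟩
  · rw [← mul_prod_erase univ _ (mem_univ j), ← neg_sub, neg_pow]
    ring
  · simp only [eval_mul, eval_pow, eval_neg, eval_one, eval_prod, eval_sub, eval_C, eval_X]
    refine mul_ne_zero (pow_ne_zero _ (neg_ne_zero.mpr one_ne_zero)) ?_
    exact prod_ne_zero_iff.mpr fun k hk =>
      pow_ne_zero _ (sub_ne_zero.mpr (hα.ne (ne_of_mem_erase hk)))

end ProdCSubXPow

end Polynomial

section Pade

variable {K : Type*} [Field K] (P : K[X]) (n μ : ℕ) (a : K)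

/- With `P = ∏ⱼ (C αⱼ - X) ^ l` (so that `σ = P.coeff`) and `n = m * l`, `padeB0 P n μ` and
`padeBj P n μ αⱼ` are the Padé polynomials `B_{l,μ,0}` and `B_{l,μ,j}`, and `padeRemainder` is
the remainder `S_{l,μ,j}` with Euler's series `F(a t)` truncated at degree `T`. -/

noncomputable def padeB0 : K[X] :=
  ∑ i ∈ range (n + 1), C (P.coeff i * (((n + μ)! : K) / ((i + μ)! : K))) * X ^ (n - i)

noncomputable def padeCoeff (N : ℕ) : K :=
  ∑ h ∈ range (min n N + 1),
    P.coeff (n - h) * (((N - h)! : K) / ((n - h + μ)! : K)) * a ^ (N - h)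

noncomputable def padeBj : K[X] :=
  C (((n + μ)! : ℕ) : K) * ∑ N ∈ range (n + μ), C (padeCoeff P n μ a N) * X ^ N

noncomputable def eulerTrunc (T : ℕ) : K[X] :=
  ∑ k ∈ range (T + 1), C ((k ! : K) * a ^ k) * X ^ k

noncomputable def padeRemainder (T : ℕ) : K[X] :=
  padeB0 P n μ * eulerTrunc a T - padeBj P n μ a

theorem coeff_padeB0 (d : ℕ) :
    (padeB0 P n μ).coeff d =
      if d ≤ n then P.coeff (n - d) * (((n + μ)! : K) / ((n - d + μ)! : K)) else 0 :=
  coeff_sum_range_C_mul_X_pow_sub _ n d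

theorem coeff_padeB0_zero [CharZero K] : (padeB0 P n μ).coeff 0 = P.coeff n := by
  rw [coeff_padeB0, if_pos (Nat.zero_le n), Nat.sub_zero,
    div_self (Nat.cast_ne_zero.mpr (factorial_ne_zero _)), mul_one]

theorem coeff_eulerTrunc {T d : ℕ} (hd : d ≤ T) : (eulerTrunc a T).coeff d = d ! * a ^ d := by
  rw [eulerTrunc, coeff_sum_range_C_mul_X_pow, if_pos (Nat.lt_succ_of_le hd)]

theorem coeff_padeB0_mul_eulerTrunc {T N : ℕ} (hN : N ≤ T) :
    (padeB0 P n μ * eulerTrunc a T).coeff N = (n + μ)! * padeCoeff P n μ a N := by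
  rw [coeff_mul, Nat.sum_antidiagonal_eq_sum_range_succ_mk, padeCoeff, mul_sum]
  have hsub : range (min n N + 1) ⊆ range (N + 1) :=
    range_subset_range.mpr (Nat.succ_le_succ (min_le_right n N))
  rw [← sum_subset hsub fun h hN' hh => ?_]
  · refine sum_congr rfl fun h hh => ?_
    simp only [mem_range, Nat.lt_succ_iff, le_min_iff] at hh
    rw [coeff_padeB0, if_pos hh.1, coeff_eulerTrunc a (by omega)]
    ring
  · simp only [mem_range, Nat.lt_succ_iff, le_min_iff, not_and_or, not_le] at hN' hh
    rw [coeff_padeB0, if_neg (by omega), zero_mul]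

theorem coeff_padeBj (N : ℕ) :
    (padeBj P n μ a).coeff N = if N < n + μ then (n + μ)! * padeCoeff P n μ a N else 0 := by
  rw [padeBj, coeff_C_mul, coeff_sum_range_C_mul_X_pow]
  split_ifs <;> simp

theorem coeff_padeRemainder {T N : ℕ} (hN : N ≤ T) :
    (padeRemainder P n μ a T).coeff N =
      if N < n + μ then 0 else (n + μ)! * padeCoeff P n μ a N := by
  rw [padeRemainder, coeff_sub, coeff_padeB0_mul_eulerTrunc P n μ a hN, coeff_padeBj]
  split_ifs <;> ring

theorem padeCoeff_add_eq_eval_iterate_derivative [CharZero K] (hP : P.natDegree ≤ n) (r : ℕ) :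
    padeCoeff P n μ a (n + μ + r) = a ^ r * (derivative^[r] (X ^ (μ + r) * P)).eval a := by
  rw [eval_iterate_derivative_X_pow_mul P a μ r (Nat.lt_succ_of_le hP), padeCoeff,
    min_eq_left (by omega), mul_sum, ← sum_range_reflect]
  refine sum_congr rfl fun i hi => ?_
  rw [mem_range] at hi
  have hfac : ((i + μ + r)! : K) = (i + μ)! * (i + μ + r).descFactorial r := by
    rw [← Nat.cast_mul, ← Nat.factorial_mul_descFactorial (Nat.le_add_left r _),
      Nat.add_sub_cancel]
  rw [show n - (n + 1 - 1 - i) = i by omega,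
    show n + μ + r - (n + 1 - 1 - i) = i + μ + r by omega, hfac]
  have : ((i + μ)! : K) ≠ 0 := Nat.cast_ne_zero.mpr (factorial_ne_zero _)
  field_simp
  ring

theorem natDegree_padeB0_le : (padeB0 P n μ).natDegree ≤ n :=
  natDegree_sum_le_of_forall_le _ _ fun _ _ => (natDegree_C_mul_X_pow_le _ _).trans (Nat.sub_le _ _)

theorem natDegree_padeBj_le : (padeBj P n μ a).natDegree ≤ n + μ - 1 := by
  refine (natDegree_C_mul_le _ _).trans (natDegree_sum_le_of_forall_le _ _ fun N hN => ?_)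
  rw [mem_range] at hN
  exact (natDegree_C_mul_X_pow_le _ _).trans (by omega)

variable {n μ a} {l : ℕ}

theorem X_pow_dvd_padeRemainder [CharZero K] {T : ℕ} (hP : (X - C a) ^ l ∣ P)
    (hdeg : P.natDegree ≤ n) (hT : n + l + μ ≤ T + 1) :
    X ^ (n + l + μ) ∣ padeRemainder P n μ a T := by
  refine X_pow_dvd_iff.mpr fun N hN => ?_
  rw [coeff_padeRemainder P n μ a (by omega)]
  split_ifs with hlow
  · rfl
  obtain ⟨r, rfl⟩ := Nat.exists_eq_add_of_le (not_lt.mp hlow)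
  rw [padeCoeff_add_eq_eval_iterate_derivative P n μ a hdeg,
    eval_iterate_derivative_of_X_sub_C_pow_dvd (hP.mul_left _) (by omega), mul_zero, mul_zero]

theorem coeff_padeRemainder_of_eq_X_sub_C_pow_mul [CharZero K] {T : ℕ} {q : K[X]}
    (hP : P = (X - C a) ^ l * q) (hdeg : P.natDegree ≤ n) (hT : n + l + μ ≤ T) :
    (padeRemainder P n μ a T).coeff (n + l + μ) =
      ((n + μ)! * l !) * (a ^ (2 * l) * q.eval a) * a ^ μ := by
  rw [coeff_padeRemainder P n μ a hT, if_neg (by omega), show n + l + μ = n + μ + l by ring,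
    padeCoeff_add_eq_eval_iterate_derivative P n μ a hdeg, hP,
    show X ^ (μ + l) * ((X - C a) ^ l * q) = (X - C a) ^ l * (X ^ (μ + l) * q) by ring,
    eval_iterate_derivative_X_sub_C_pow_mul, eval_mul, eval_pow, eval_X]
  ring

end Pade

theorem Fin.sum_succAbove_add_eq_sum_castSucc_add {M : Type*} [AddCommMonoid M] {m : ℕ}
    (e : Fin (m + 1) → M) (i : Fin (m + 1)) :
    ∑ r, e (i.succAbove r) + e i = ∑ r : Fin m, e r.castSucc + e (Fin.last m) := by
  rw [add_comm, ← Fin.sum_univ_succAbove, Fin.sum_univ_castSucc]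

namespace Matrix

variable {R : Type*} [CommRing R]

theorem natDegree_det_le {n : Type*} [Fintype n] [DecidableEq n] (A : Matrix n n R[X])
    (a b : n → ℕ) (h : ∀ i j, (A i j).natDegree ≤ a i + b j) :
    A.det.natDegree ≤ ∑ i, a i + ∑ j, b j := by
  rw [det_apply]
  refine natDegree_sum_le_of_forall_le _ _ fun π _ => ?_
  refine (natDegree_smul_le _ _).trans ((natDegree_prod_le _ _).trans ?_)
  calc ∑ j, (A (π j) j).natDegree ≤ ∑ j, (a (π j) + b j) := sum_le_sum fun j _ => h _ _
    _ = ∑ i, a i + ∑ j, b j := by rw [sum_add_distrib, Equiv.sum_comp π a]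

theorem det_mul_mul_pow_ne_zero [IsDomain R] {m : ℕ} {u v α : Fin m → R}
    (hu : ∀ i, u i ≠ 0) (hv : ∀ j, v j ≠ 0) (hα : Function.Injective α) :
    (of fun i j => u i * v j * α j ^ (i : ℕ)).det ≠ 0 := by
  have : (of fun i j => u i * v j * α j ^ (i : ℕ)) =
      of fun i j => u i * (of fun i j => v j * (vandermonde α)ᵀ i j) i j := by
    ext; simp [vandermonde, mul_assoc]
  rw [this, det_mul_column, det_mul_row, det_transpose]
  exact mul_ne_zero (prod_ne_zero_iff.mpr fun i _ => hu i)
    (mul_ne_zero (prod_ne_zero_iff.mpr fun j _ => hv j) (det_vandermonde_ne_zero_iff.mpr hα))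

section ColumnsDivisibleByXPow

variable {m : ℕ} (A : Matrix (Fin (m + 1)) (Fin (m + 1)) R[X]) (e : Fin (m + 1) → ℕ)

theorem det_eq_sum_X_pow_mul {S : Matrix (Fin (m + 1)) (Fin m) R[X]}
    (hA : ∀ i (j : Fin m), A i j.succ = X ^ e i * S i j) :
    A.det = ∑ i : Fin (m + 1), (-1) ^ (i : ℕ) * A i 0 *
      (X ^ (∑ r : Fin m, e (i.succAbove r)) * (S.submatrix i.succAbove id).det) := by
  rw [det_succ_column_zero]
  refine sum_congr rfl fun i _ => ?_
  have : A.submatrix i.succAbove Fin.succ =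
      of fun r j => X ^ e (i.succAbove r) * S.submatrix i.succAbove id r j := by
    ext; simp [hA]
  rw [this, det_mul_column, prod_pow_eq_pow_sum]

theorem X_pow_dvd_det (he : Monotone e) (hA : ∀ i (j : Fin m), X ^ e i ∣ A i j.succ) :
    X ^ ∑ r : Fin m, e r.castSucc ∣ A.det := by
  choose S hS using hA
  rw [det_eq_sum_X_pow_mul A e hS]
  refine dvd_sum fun i _ => Dvd.dvd.mul_left ((pow_dvd_pow X ?_).mul_right _) _
  have := Fin.sum_succAbove_add_eq_sum_castSucc_add e i
  have := he (Fin.le_last i)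
  omega

theorem coeff_det_of_X_pow_dvd (he : StrictMono e)
    (hA : ∀ i (j : Fin m), X ^ e i ∣ A i j.succ) :
    A.det.coeff (∑ r : Fin m, e r.castSucc) = (-1) ^ m * (A (Fin.last m) 0).coeff 0 *
      (of fun r j : Fin m => (A r.castSucc j.succ).coeff (e r.castSucc)).det := by
  choose S hS using hA
  rw [det_eq_sum_X_pow_mul A e hS, finsetSum_coeff,
    sum_eq_single_of_mem (Fin.last m) (mem_univ _) fun i _ hi => ?_]
  · simp only [Fin.succAbove_last, Fin.val_last]
    rw [mul_left_comm, coeff_X_pow_mul', if_pos le_rfl, Nat.sub_self, mul_coeff_zero,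
      mul_coeff_zero, coeff_zero_eq_eval_zero, coeff_zero_eq_eval_zero,
      coeff_zero_eq_eval_zero, ← coe_evalRingHom, RingHom.map_det]
    congr 2
    · simp
    · ext r j
      simp only [RingHom.mapMatrix_apply, coe_evalRingHom, map_apply, of_apply, hS,
        coeff_X_pow_mul', le_refl, if_true, Nat.sub_self, coeff_zero_eq_eval_zero]
      rfl
  · have := Fin.sum_succAbove_add_eq_sum_castSucc_add e i
    have := he (Fin.lt_last_iff_ne_last.mpr hi)
    rw [mul_left_comm, coeff_X_pow_mul', if_neg (by omega)]

end ColumnsDivisibleByXPow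

end Matrix

theorem Fin.sum_val (m : ℕ) : ∑ i : Fin m, (i : ℕ) = m * (m - 1) / 2 := by
  rw [Fin.sum_univ_eq_sum_range (fun i => i) m, sum_range_id]

theorem Fin.sum_val_sub_one (m : ℕ) : ∑ i : Fin (m + 1), ((i : ℕ) - 1) = m * (m - 1) / 2 := by
  simp [Fin.sum_univ_succ, Fin.sum_val]

section PadeMatrix

variable {K : Type*} [Field K] {m : ℕ} (α : Fin m → K) (l : ℕ)

noncomputable def padeMatrix : Matrix (Fin (m + 1)) (Fin (m + 1)) K[X] :=
  Matrix.of fun μ => Fin.cons (padeB0 (∏ k, (C (α k) - X) ^ l) (m * l) μ)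
    fun j => padeBj (∏ k, (C (α k) - X) ^ l) (m * l) μ (α j)

noncomputable def padeRemainderMatrix (T : ℕ) : Matrix (Fin (m + 1)) (Fin (m + 1)) K[X] :=
  Matrix.of fun μ => Fin.cons (padeB0 (∏ k, (C (α k) - X) ^ l) (m * l) μ)
    fun j => -padeRemainder (∏ k, (C (α k) - X) ^ l) (m * l) μ (α j) T

theorem det_padeRemainderMatrix (T : ℕ) :
    (padeRemainderMatrix α l T).det = (padeMatrix α l).det := by
  rw [← Matrix.det_transpose, ← Matrix.det_transpose (padeMatrix α l)]
  refine Matrix.det_eq_of_forall_row_eq_smul_add_const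
    (Fin.cons 0 fun j => -eulerTrunc (α j) T) 0 rfl fun c μ => ?_
  induction c using Fin.cases <;>
    simp [padeRemainderMatrix, padeMatrix, padeRemainder, sub_eq_add_neg, mul_comm]

theorem natDegree_det_padeMatrix_le :
    (padeMatrix α l).det.natDegree ≤ m * (m + 1) * l + m * (m - 1) / 2 := by
  have hweights : ∑ μ : Fin (m + 1), ((μ : ℕ) - 1) + ∑ _c : Fin (m + 1), m * l =
      m * (m + 1) * l + m * (m - 1) / 2 := by
    simp only [Fin.sum_val_sub_one, sum_const, Finset.card_fin, smul_eq_mul]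
    ring
  refine (Matrix.natDegree_det_le _ (fun μ : Fin (m + 1) => (μ : ℕ) - 1) (fun _ => m * l)
    fun μ c => ?_).trans hweights.le
  induction c using Fin.cases with
  | zero => exact (natDegree_padeB0_le _ _ _).trans (Nat.le_add_left _ _)
  | succ j => exact (natDegree_padeBj_le _ _ _ _).trans (by omega)

variable {α}

theorem X_pow_dvd_padeRemainderMatrix [CharZero K] {T : ℕ} (hT : m * l + l + m ≤ T)
    (μ : Fin (m + 1)) (j : Fin m) :
    X ^ (m * l + l + μ) ∣ padeRemainderMatrix α l T μ j.succ := by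
  have hdvd : (X - C (α j)) ^ l ∣ ∏ k, (C (α k) - X) ^ l :=
    (pow_dvd_pow_of_dvd ⟨-1, by ring⟩ l).trans (dvd_prod_of_mem _ (mem_univ j))
  simpa [padeRemainderMatrix] using (X_pow_dvd_padeRemainder _ hdvd
    (natDegree_prod_C_sub_X_pow_le α l) (by omega)).neg_right

theorem det_coeff_padeRemainderMatrix_ne_zero [CharZero K] (hα0 : ∀ i, α i ≠ 0)
    (hinj : Function.Injective α) {T : ℕ} (hT : m * l + l + m ≤ T) :
    (Matrix.of fun r j : Fin m =>
      (padeRemainderMatrix α l T r.castSucc j.succ).coeff (m * l + l + r)).det ≠ 0 := by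
  choose q hq hq0 using exists_prod_C_sub_X_pow_eq_X_sub_C_pow_mul hinj l
  have hentry (r j : Fin m) : (padeRemainderMatrix α l T r.castSucc j.succ).coeff (m * l + l + r) =
      -((m * l + r)! * l ! : K) * (α j ^ (2 * l) * (q j).eval (α j)) * α j ^ (r : ℕ) := by
    simp only [padeRemainderMatrix, Matrix.of_apply, Fin.cons_succ, coeff_neg, Fin.val_castSucc]
    rw [coeff_padeRemainder_of_eq_X_sub_C_pow_mul _ (hq j) (natDegree_prod_C_sub_X_pow_le α l)
      (by omega)]
    ring
  simp_rw [hentry]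
  refine Matrix.det_mul_mul_pow_ne_zero (fun r => ?_) (fun j => ?_) hinj
  · simp [factorial_ne_zero]
  · exact mul_ne_zero (pow_ne_zero _ (hα0 j)) (hq0 j)

theorem det_padeMatrix_eq [CharZero K] (hα0 : ∀ i, α i ≠ 0) (hinj : Function.Injective α) :
    ∃ b : K, b ≠ 0 ∧
      (padeMatrix α l).det = C b * X ^ (m * (m + 1) * l + m * (m - 1) / 2) := by
  set A := padeRemainderMatrix α l (m * l + l + m)
  set e : Fin (m + 1) → ℕ := fun μ => m * l + l + μ
  have he : StrictMono e := fun _ _ h => Nat.add_lt_add_left h _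
  have hdvd (μ : Fin (m + 1)) (j : Fin m) : X ^ e μ ∣ A μ j.succ :=
    X_pow_dvd_padeRemainderMatrix l le_rfl μ j
  have hD : ∑ r : Fin m, e r.castSucc = m * (m + 1) * l + m * (m - 1) / 2 := by
    simp only [e, Fin.val_castSucc, sum_add_distrib, sum_const, Finset.card_fin,
      smul_eq_mul, Fin.sum_val]
    ring
  have hcoeff : A.det.coeff (m * (m + 1) * l + m * (m - 1) / 2) ≠ 0 := by
    rw [← hD, Matrix.coeff_det_of_X_pow_dvd A e he hdvd]
    refine mul_ne_zero (mul_ne_zero (by simp) ?_)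
      (det_coeff_padeRemainderMatrix_ne_zero l hα0 hinj le_rfl)
    simp [A, padeRemainderMatrix, coeff_padeB0_zero, coeff_prod_C_sub_X_pow]
  rw [← det_padeRemainderMatrix α l (m * l + l + m)]
  exact ⟨_, hcoeff, eq_C_mul_X_pow_of_X_pow_dvd (hD ▸ Matrix.X_pow_dvd_det A e he.monotone hdvd)
    (det_padeRemainderMatrix α l _ ▸ natDegree_det_padeMatrix_le α l)⟩

end PadeMatrix

theorem pade_determinant_ne_zero_general {K : Type*} [Field K] [CharZero K]
    {m : ℕ} (α : Fin m → K) (hα0 : ∀ i, α i ≠ 0)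
    (hinj : Function.Injective α)
    (l : ℕ)
    (σ : ℕ → K)
    (hσ : ∀ i, σ i = (∏ j, (C (α j) - X) ^ l).coeff i)
    (B0 : ℕ → K[X])
    (hB0 : ∀ μ, B0 μ = ∑ i ∈ range (m * l + 1),
        C (σ i * (((m * l + μ)! : K) / ((i + μ)! : K))) * X ^ (m * l - i))
    (Bj : ℕ → Fin m → K[X])
    (hBj : ∀ μ j, Bj μ j = C (((m * l + μ)! : ℕ) : K) *
        ∑ N ∈ range (m * l + μ),
          C (∑ h ∈ range (min (m * l) N + 1),
              σ (m * l - h) * (((N - h)! : K) / ((m * l - h + μ)! : K)) *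
                (α j) ^ (N - h)) * X ^ N)
    (M : Matrix (Fin (m + 1)) (Fin (m + 1)) K[X])
    (hM : M = Matrix.of fun μ : Fin (m + 1) =>
        Fin.cons (B0 (μ : ℕ)) (fun j : Fin m => Bj (μ : ℕ) j)) :
    M.det ≠ 0 ∧
      ∃ b : K, b ≠ 0 ∧
        M.det = C b * X ^ (m * (m + 1) * l + m * (m - 1) / 2) := by
  obtain rfl : σ = (∏ j, (C (α j) - X) ^ l).coeff := funext hσ
  have hpade : M = padeMatrix α l := by
    rw [hM]
    ext μ c
    induction c using Fin.cases <;> simp [padeMatrix, padeB0, padeBj, padeCoeff, hB0, hBj]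
  obtain ⟨b, hb, hdet⟩ := det_padeMatrix_eq l hα0 hinj
  rw [hpade, hdet]
  exact ⟨mul_ne_zero (C_ne_zero.mpr hb) (pow_ne_zero _ X_ne_zero), b, hb, rfl⟩

/-- the determinant of the `(m+1)×(m+1)` matrix of Padé polynomials
`(B_{l,μ,j}(t))_{0≤μ≤m, 0≤j≤m}` for Euler's series at pairwise distinct nonzero
points `α₁,…,α_m` is a nonzero polynomial; more precisely it equals
`b · t^(m(m+1)l + m(m−1)/2)` for some nonzero constant `b`. -/
theorem pade_determinant_ne_zero {K : Type*} [Field K] [CharZero K]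
    {m : ℕ} (hm : 1 ≤ m) (α : Fin m → K) (hα0 : ∀ i, α i ≠ 0)
    (hinj : Function.Injective α)
    (l : ℕ) (hl : 1 ≤ l)
    (σ : ℕ → K)
    (hσ : ∀ i, σ i = (∏ j, (C (α j) - X) ^ l).coeff i)
    (B0 : ℕ → K[X])
    (hB0 : ∀ μ, B0 μ = ∑ i ∈ range (m * l + 1),
        C (σ i * (((m * l + μ)! : K) / ((i + μ)! : K))) * X ^ (m * l - i))
    (Bj : ℕ → Fin m → K[X])
    (hBj : ∀ μ j, Bj μ j = C (((m * l + μ)! : ℕ) : K) *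
        ∑ N ∈ range (m * l + μ),
          C (∑ h ∈ range (min (m * l) N + 1),
              σ (m * l - h) * (((N - h)! : K) / ((m * l - h + μ)! : K)) *
                (α j) ^ (N - h)) * X ^ N)
    (M : Matrix (Fin (m + 1)) (Fin (m + 1)) K[X])
    (hM : M = Matrix.of fun μ : Fin (m + 1) =>
        Fin.cons (B0 (μ : ℕ)) (fun j : Fin m => Bj (μ : ℕ) j)) :
    M.det ≠ 0 ∧
      ∃ b : K, b ≠ 0 ∧
        M.det = C b * X ^ (m * (m + 1) * l + m * (m - 1) / 2) :=
  pade_determinant_ne_zero_general α hα0 hinj l σ hσ B0 hB0 Bj hBj M hM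
end

section
/- Let K be a field of characteristic zero, let α_1,…,α_m ∈ K be pairwise distinct and nonzero, let l ≥ 1, and let σ_i be defined by Π_{i=1}^m (α_i − w)^l = Σ_{i=0}^{ml} σ_i w^i. Then for every j ∈ {1,…,m}, Σ_{i=0}^{ml} σ_i · i^l · α_j^i = (−1)^l · l! · α_j^l · Π_{i≠j} (α_i − α_j)^l, which is nonzero. -/
open Polynomial Finset

/-!
The Euler operator `θ = X · d/dX` multiplies the `i`-th coefficient of a polynomial by `i`, so the
sum on the left is `(θ^l P)(α_j)` for `P = ∏ i, (α_i - X)^l`. Writing `P = (α_j - X)^l Q`, each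
application of `θ` lowers the order of the root `α_j` by one and contributes a factor
`-(order) · α_j` to the value of the cofactor at `α_j`; after `l` steps this gives
`(θ^l P)(α_j) = (-α_j)^l l! Q(α_j)`, which is nonzero since the `α_i` are distinct and nonzero.
-/

namespace Polynomial

section CommSemiring

variable {R : Type*} [CommSemiring R]

noncomputable def eulerOp (p : R[X]) : R[X] := X * derivative p

theorem coeff_eulerOp (p : R[X]) (i : ℕ) : (eulerOp p).coeff i = i * p.coeff i := by
  cases i with
  | zero => simp [eulerOp]
  | succ n =>
    rw [eulerOp, coeff_X_mul, coeff_derivative]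
    push_cast
    ring

theorem coeff_iterate_eulerOp (l : ℕ) (p : R[X]) (i : ℕ) :
    (eulerOp^[l] p).coeff i = (i : R) ^ l * p.coeff i := by
  induction l with
  | zero => simp
  | succ k ih =>
    rw [Function.iterate_succ_apply', coeff_eulerOp, ih]
    ring

theorem natDegree_iterate_eulerOp_le (l : ℕ) (p : R[X]) :
    (eulerOp^[l] p).natDegree ≤ p.natDegree :=
  natDegree_le_iff_coeff_eq_zero.mpr fun i hi => by
    rw [coeff_iterate_eulerOp, coeff_eq_zero_of_natDegree_lt (by exact_mod_cast hi), mul_zero]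

theorem eval_iterate_eulerOp_eq_sum (l : ℕ) (p : R[X]) {N : ℕ} (hN : p.natDegree < N) (a : R) :
    (eulerOp^[l] p).eval a = ∑ i ∈ range N, p.coeff i * (i : R) ^ l * a ^ i := by
  rw [eval_eq_sum_range' ((natDegree_iterate_eulerOp_le l p).trans_lt hN)]
  exact sum_congr rfl fun i _ => by rw [coeff_iterate_eulerOp]; ring

end CommSemiring

section CommRing

variable {R : Type*} [CommRing R]

theorem eulerOp_C_sub_X_pow_succ_mul (a : R) (n : ℕ) (S : R[X]) :
    eulerOp ((C a - X) ^ (n + 1) * S) =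
      (C a - X) ^ n * (X * ((C a - X) * derivative S - (n + 1 : R[X]) * S)) := by
  simp only [eulerOp, derivative_mul, derivative_pow, derivative_sub, derivative_C,
    derivative_X, Nat.cast_add, Nat.cast_one, map_add, map_natCast, map_one,
    add_tsub_cancel_right]
  ring

theorem exists_iterate_eulerOp_C_sub_X_pow_mul (a : R) (k : ℕ) :
    ∀ (n : ℕ) (S : R[X]), ∃ T : R[X],
      eulerOp^[k] ((C a - X) ^ (n + k) * S) = (C a - X) ^ n * T ∧
        T.eval a = (-a) ^ k * ((n + k).descFactorial k : R) * S.eval a := by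
  induction k with
  | zero => exact fun n S => ⟨S, by simp, by simp⟩
  | succ k ih =>
    intro n S
    obtain ⟨T, hT, hTa⟩ := ih n (X * ((C a - X) * derivative S - ((n + k : ℕ) + 1 : R[X]) * S))
    refine ⟨T, ?_, ?_⟩
    · rw [Function.iterate_succ_apply, ← add_assoc, eulerOp_C_sub_X_pow_succ_mul, hT]
    · rw [hTa, ← add_assoc, Nat.succ_descFactorial_succ]
      simp only [Nat.cast_add, eval_mul, eval_X, eval_sub, eval_C, sub_self, zero_mul, eval_add,
        eval_natCast, eval_one, zero_sub, mul_neg, Nat.cast_mul, Nat.cast_one]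
      ring

theorem eval_iterate_eulerOp_C_sub_X_pow_mul (a : R) (n : ℕ) (S : R[X]) :
    (eulerOp^[n] ((C a - X) ^ n * S)).eval a = (-a) ^ n * (n.factorial : R) * S.eval a := by
  obtain ⟨T, hT, hTa⟩ := exists_iterate_eulerOp_C_sub_X_pow_mul a n 0 S
  rw [zero_add] at hT hTa
  rw [hT, pow_zero, one_mul, hTa, Nat.descFactorial_self]

end CommRing

end Polynomial

theorem sigma_power_sum_eq_vandermonde_general {F : Type*} [Field F] [CharZero F]
    {m : ℕ} (α : Fin m → F) (hα0 : ∀ i, α i ≠ 0) (hinj : Function.Injective α)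
    (l : ℕ)
    (σ : ℕ → F)
    (hσ : ∀ i, σ i = (∏ i, (C (α i) - X) ^ l).coeff i)
    (j : Fin m) :
    ∑ i ∈ range (m * l + 1), σ i * (i : F) ^ l * (α j) ^ i
        = (-1) ^ l * (Nat.factorial l : F) * (α j) ^ l *
            ∏ i ∈ univ.erase j, (α i - α j) ^ l ∧
      ∑ i ∈ range (m * l + 1), σ i * (i : F) ^ l * (α j) ^ i ≠ 0 := by
  have hdeg : (∏ i, (C (α i) - X) ^ l).natDegree < m * l + 1 := by
    refine Nat.lt_succ_of_le ((natDegree_prod_le _ _).trans ?_)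
    calc _ ≤ ∑ _i : Fin m, l := sum_le_sum fun i _ => by compute_degree!
      _ = m * l := by simp
  have hsum : ∑ i ∈ range (m * l + 1), σ i * (i : F) ^ l * (α j) ^ i
      = (-1) ^ l * (Nat.factorial l : F) * (α j) ^ l * ∏ i ∈ univ.erase j, (α i - α j) ^ l := by
    simp only [hσ]
    rw [← eval_iterate_eulerOp_eq_sum l _ hdeg, ← mul_prod_erase univ _ (mem_univ j),
      eval_iterate_eulerOp_C_sub_X_pow_mul, eval_prod]
    simp only [eval_pow, eval_sub, eval_C, eval_X]
    rw [neg_pow (α j)]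
    ring
  refine ⟨hsum, hsum ▸ mul_ne_zero (mul_ne_zero (mul_ne_zero ?_ ?_) ?_) ?_⟩
  · exact pow_ne_zero _ (neg_ne_zero.mpr one_ne_zero)
  · exact_mod_cast l.factorial_ne_zero
  · exact pow_ne_zero _ (hα0 j)
  · exact prod_ne_zero_iff.mpr fun i hi =>
      pow_ne_zero _ (sub_ne_zero.mpr (hinj.ne (ne_of_mem_erase hi)))

/-- with `σ_i` defined by `∏ i, (α i − w)^l = ∑ i, σ i * w^i`,
for pairwise distinct nonzero `α₁,…,α_m` in a field of characteristic zero one has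
`∑_{i=0}^{ml} σ i * i^l * (α j)^i = (−1)^l · l! · (α j)^l · ∏_{i ≠ j} (α i − α j)^l ≠ 0`. -/
theorem sigma_power_sum_eq_vandermonde {F : Type*} [Field F] [CharZero F]
    {m : ℕ} (α : Fin m → F) (hα0 : ∀ i, α i ≠ 0) (hinj : Function.Injective α)
    (l : ℕ) (hl : 1 ≤ l)
    (σ : ℕ → F)
    (hσ : ∀ i, σ i = (∏ i, (C (α i) - X) ^ l).coeff i)
    (j : Fin m) :
    ∑ i ∈ range (m * l + 1), σ i * (i : F) ^ l * (α j) ^ i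
        = (-1) ^ l * (Nat.factorial l : F) * (α j) ^ l *
            ∏ i ∈ univ.erase j, (α i - α j) ^ l ∧
      ∑ i ∈ range (m * l + 1), σ i * (i : F) ^ l * (α j) ^ i ≠ 0 :=
  sigma_power_sum_eq_vandermonde_general α hα0 hinj l σ hσ j
end

section
/- Let K be a field of characteristic zero, α_1,…,α_m ∈ K pairwise distinct and nonzero, and λ_0,λ_1,…,λ_m ∈ K with at least one λ_j ≠ 0. For l ≥ 1 and μ ∈ {0,1,…,m}, let b_{l,μ,i} = B_{l,μ,i}(1) be the values at t = 1 of the Padé polynomials for Euler's series, and set W(l,μ) = λ_0 b_{l,μ,0} + λ_1 b_{l,μ,1} + … + λ_m b_{l,μ,m}. Then for every integer l ≥ 1 there exists μ ∈ {0,1,…,m} such that W(l,μ) ≠ 0. -/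
set_option linter.unusedSectionVars false
set_option maxHeartbeats 1000000

open Polynomial Finset Nat

namespace Stmt10

variable {K : Type*} [Field K] [CharZero K]

/-- cast of factorial quotient as descFactorial -/
lemma fac_div_cast (a b : ℕ) (h : b ≤ a) :
    ((a ! : K) / (b ! : K)) = (a.descFactorial (a - b) : K) := by
  have h1 : (a - (a - b))! * a.descFactorial (a - b) = a ! :=
    Nat.factorial_mul_descFactorial (Nat.sub_le a b)
  rw [Nat.sub_sub_self h] at h1
  rw [div_eq_iff (by exact_mod_cast (Nat.factorial_ne_zero b) : ((b : ℕ)! : K) ≠ 0)]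
  exact_mod_cast (h1.symm.trans (mul_comm _ _))

lemma coeff_sum_C_mul_X_pow (M : ℕ) (c : ℕ → K) (t : ℕ) :
    (∑ i ∈ range M, C (c i) * X ^ i).coeff t = if t < M then c t else 0 := by
  rw [finset_sum_coeff]
  simp only [coeff_C_mul, coeff_X_pow, mul_ite, mul_one, mul_zero]
  rw [Finset.sum_ite_eq (range M) t c]
  simp [Finset.mem_range]

lemma natDegree_sum_C_mul_X_pow_le (M : ℕ) (c : ℕ → K) (B : ℕ) (hB : M ≤ B + 1) :
    (∑ i ∈ range M, C (c i) * X ^ i).natDegree ≤ B :=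
  natDegree_sum_le_of_forall_le _ _ fun i hi =>
    (natDegree_C_mul_X_pow_le _ _).trans (by rw [Finset.mem_range] at hi; omega)

/-- determinant divisibility from rowwise divisibility -/
lemma det_dvd_of_row_dvd {N : ℕ} (p : Fin N → K[X]) (A : Matrix (Fin N) (Fin N) K[X])
    (h : ∀ i j, p i ∣ A i j) : (∏ i, p i) ∣ A.det := by
  rw [Matrix.det_apply']
  refine Finset.dvd_sum fun σ _ => Dvd.dvd.mul_left ?_ _
  calc (∏ i, p i) = ∏ i, p (σ i) := (Equiv.prod_comp σ p).symm
  _ ∣ ∏ i, A (σ i) i := Finset.prod_dvd_prod_of_dvd _ _ fun i _ => h (σ i) i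

/-- determinant degree bound from rowwise degree bounds -/
lemma natDegree_det_le {N : ℕ} (d : Fin N → ℕ) (A : Matrix (Fin N) (Fin N) K[X])
    (h : ∀ i j, (A i j).natDegree ≤ d i) : A.det.natDegree ≤ ∑ i, d i := by
  rw [Matrix.det_apply']
  refine natDegree_sum_le_of_forall_le _ _ fun σ _ => ?_
  refine (natDegree_mul_le).trans ?_
  have h1 : (∏ i, A (σ i) i).natDegree ≤ ∑ i, d i := by
    refine (natDegree_prod_le _ _).trans ?_
    calc ∑ i, (A (σ i) i).natDegree ≤ ∑ i, d (σ i) :=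
          Finset.sum_le_sum fun i _ => h (σ i) i
    _ = ∑ i, d i := Equiv.sum_comp σ d
  have h2 : (Equiv.Perm.sign σ : K[X]).natDegree = 0 := natDegree_intCast _
  omega

variable {m : ℕ} (l : ℕ) (α : Fin m → K)

noncomputable def Qp : K[X] := ∏ j, (C (α j) - X) ^ l

noncomputable def B0 (μ : ℕ) : K[X] :=
  ∑ h ∈ range (m * l + 1),
    C ((Qp l α).coeff (m * l - h) * (((m * l + μ)! : K) / ((m * l - h + μ)! : K))) * X ^ h

noncomputable def Bj (μ : ℕ) (j : Fin m) : K[X] :=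
  ∑ N ∈ range (m * l + μ),
    C ((((m * l + μ)! : ℕ) : K) * ∑ h ∈ range (min (m * l) N + 1),
      (Qp l α).coeff (m * l - h) * (((N - h)! : K) / ((m * l - h + μ)! : K)) * (α j) ^ (N - h))
      * X ^ N

noncomputable def Ep (T : ℕ) (j : Fin m) : K[X] :=
  ∑ k ∈ range (T + 1), C ((k ! : K) * (α j) ^ k) * X ^ k

lemma natDegree_Qp : (Qp l α : K[X]).natDegree = m * l := by
  have h1 : ∀ j : Fin m, ((C (α j) - X : K[X])) ≠ 0 := by
    intro j h
    have := congrArg (fun p => Polynomial.coeff p 1) h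
    simp [coeff_C] at this
  rw [Qp, natDegree_prod _ _ (fun j _ => pow_ne_zero _ (h1 j))]
  have h2 : ∀ j : Fin m, ((C (α j) - X : K[X])).natDegree = 1 := by
    intro j
    have : (C (α j) - X : K[X]) = -(X - C (α j)) := by ring
    rw [this, natDegree_neg, natDegree_X_sub_C]
  simp only [natDegree_pow, h2]
  simp [mul_comm]

lemma Qp_ne_zero : (Qp l α : K[X]) ≠ 0 := by
  rw [Qp]
  rw [Finset.prod_ne_zero_iff]
  intro j _
  apply pow_ne_zero
  intro h
  have := congrArg (fun p => Polynomial.coeff p 1) h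
  simp [coeff_C] at this

lemma dvd_Qp (j : Fin m) : ((X - C (α j)) ^ l : K[X]) ∣ Qp l α := by
  have h1 : ((X - C (α j)) ^ l : K[X]) ∣ (C (α j) - X) ^ l :=
    pow_dvd_pow_of_dvd ⟨-1, by ring⟩ l
  exact h1.trans (Finset.dvd_prod_of_mem _ (Finset.mem_univ j))

lemma coeff_B0 (μ t : ℕ) : (B0 l α μ).coeff t =
    if t < m * l + 1 then
      (Qp l α).coeff (m * l - t) * (((m * l + μ)! : K) / ((m * l - t + μ)! : K))
    else 0 := coeff_sum_C_mul_X_pow _ _ _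

lemma coeff_Bj (μ : ℕ) (j : Fin m) (t : ℕ) : (Bj l α μ j).coeff t =
    if t < m * l + μ then
      (((m * l + μ)! : ℕ) : K) * ∑ h ∈ range (min (m * l) t + 1),
        (Qp l α).coeff (m * l - h) * (((t - h)! : K) / ((m * l - h + μ)! : K)) * (α j) ^ (t - h)
    else 0 := coeff_sum_C_mul_X_pow _ _ _

lemma coeff_Ep (T : ℕ) (j : Fin m) (t : ℕ) : (Ep α T j).coeff t =
    if t < T + 1 then (t ! : K) * (α j) ^ t else 0 := coeff_sum_C_mul_X_pow _ _ _

/-- vanishing of low iterated derivatives at a high-multiplicity root -/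
lemma eval_iter_deriv_zero {a : K} {p : K[X]} {L s : ℕ} (hd : (X - C a) ^ L ∣ p) (hs : s < L) :
    eval a (derivative^[s] p) = 0 := by
  obtain ⟨g, rfl⟩ := hd
  rw [iterate_derivative_mul, eval_finset_sum]
  refine Finset.sum_eq_zero fun k hk => ?_
  rw [Finset.mem_range] at hk
  have h2 : L - (s - k) ≠ 0 := by omega
  rw [iterate_derivative_X_sub_pow, eval_smul, smul_mul_assoc, eval_smul, eval_mul,
    eval_pow, eval_sub, eval_X, eval_C, sub_self, zero_pow h2, zero_mul, smul_zero, smul_zero]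

/-- value of the L-th derivative at an exactly-L-fold root -/
lemma eval_iter_deriv_top (a : K) (g : K[X]) (L : ℕ) :
    eval a (derivative^[L] ((X - C a) ^ L * g)) = (L ! : K) * eval a g := by
  rw [iterate_derivative_mul, eval_finset_sum]
  rw [Finset.sum_eq_single 0]
  · simp only [Nat.sub_zero, Nat.choose_zero_right, one_smul, Function.iterate_zero, id_eq,
      iterate_derivative_X_sub_pow_self, eval_mul, eval_natCast]
  · intro k hk hk0
    rw [Finset.mem_range] at hk
    have h2 : L - (L - k) ≠ 0 := by omega
    rw [iterate_derivative_X_sub_pow, eval_smul, smul_mul_assoc, eval_smul, eval_mul,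
      eval_pow, eval_sub, eval_X, eval_C, sub_self, zero_pow h2, zero_mul, smul_zero, smul_zero]
  · simp

/-- derivative representation of certain factorial sums -/
lemma deriv_rep (k s : ℕ) (a : K) (hs : s ≤ k) :
    eval a (derivative^[s] (X ^ k * Qp l α)) =
      ∑ i ∈ range (m * l + 1),
        (Qp l α).coeff i * (((k + i)! : K) / ((k + i - s)! : K)) * a ^ (k + i - s) := by
  have hdeg : (Qp l α).natDegree < m * l + 1 := by rw [natDegree_Qp]; omega
  have h1 : X ^ k * Qp l α =
      ∑ i ∈ range (m * l + 1), C ((Qp l α).coeff i) * X ^ (k + i) := by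
    conv_lhs => rw [(Qp l α).as_sum_range' (m * l + 1) hdeg]
    rw [Finset.mul_sum]
    exact Finset.sum_congr rfl fun i _ => by
      rw [← C_mul_X_pow_eq_monomial, pow_add]; ring
  rw [h1, iterate_derivative_sum, eval_finset_sum]
  refine Finset.sum_congr rfl fun i hi => ?_
  rw [iterate_derivative_C_mul, iterate_derivative_X_pow_eq_smul, smul_eq_C_mul,
    eval_mul, eval_C, eval_mul, eval_C, eval_pow, eval_X]
  rw [fac_div_cast (k + i) (k + i - s) (by omega)]
  rw [show k + i - (k + i - s) = s by omega]
  ring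

lemma coeff_B0_mul_Ep (μ T : ℕ) (j : Fin m) (N : ℕ) (hN : N ≤ T) :
    (B0 l α μ * Ep α T j).coeff N =
      ∑ h ∈ range (min (m * l) N + 1),
        (Qp l α).coeff (m * l - h) * (((m * l + μ)! : K) / ((m * l - h + μ)! : K)) *
          (((N - h)! : K) * α j ^ (N - h)) := by
  rw [coeff_mul, Finset.Nat.sum_antidiagonal_eq_sum_range_succ_mk]
  have key : ∀ h ∈ range (N + 1), (B0 l α μ).coeff h * (Ep α T j).coeff (N - h) =
      if h < m * l + 1 then
        (Qp l α).coeff (m * l - h) * (((m * l + μ)! : K) / ((m * l - h + μ)! : K)) *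
          (((N - h)! : K) * α j ^ (N - h))
      else 0 := by
    intro h hh
    rw [Finset.mem_range] at hh
    rw [coeff_B0, coeff_Ep, if_pos (by omega : N - h < T + 1)]
    split
    · ring
    · rw [zero_mul]
  rw [Finset.sum_congr rfl key]
  rw [(Finset.sum_subset (Finset.range_subset_range.mpr (by omega : min (m * l) N + 1 ≤ N + 1))
      (by
        intro x hx hnx
        simp only [Finset.mem_range] at hx hnx
        rw [if_neg (by omega)])).symm]
  refine Finset.sum_congr rfl fun h hh => ?_
  rw [Finset.mem_range] at hh
  rw [if_pos (by omega)]

noncomputable def Pp (T μ : ℕ) (j : Fin m) : K[X] := B0 l α μ * Ep α T j - Bj l α μ j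

noncomputable def gj (j : Fin m) : K[X] :=
  (-1 : K[X]) ^ l * ∏ i ∈ Finset.univ.erase j, (C (α i) - X) ^ l

lemma Qp_factor (j : Fin m) : Qp l α = (X - C (α j)) ^ l * gj l α j := by
  rw [Qp, gj, ← Finset.mul_prod_erase _ _ (Finset.mem_univ j)]
  have h1 : (C (α j) - X : K[X]) = -(X - C (α j)) := by ring
  rw [h1, neg_pow]
  ring

lemma eval_gj (j : Fin m) :
    eval (α j) (gj l α j) = (-1 : K) ^ l * ∏ i ∈ Finset.univ.erase j, (α i - α j) ^ l := by
  simp [gj, eval_prod]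

lemma coeff_Pp_low (T μ : ℕ) (j : Fin m) (N : ℕ) (hN : N ≤ T) (hlow : N < m * l + μ) :
    (Pp l α T μ j).coeff N = 0 := by
  rw [Pp, coeff_sub, coeff_B0_mul_Ep l α μ T j N hN, coeff_Bj, if_pos hlow, Finset.mul_sum,
    sub_eq_zero]
  exact Finset.sum_congr rfl fun h hh => by ring

lemma coeff_Pp_mid (T μ : ℕ) (j : Fin m) (N : ℕ) (hN : N ≤ T) (hge : m * l + μ ≤ N) :
    (Pp l α T μ j).coeff N = ((m * l + μ)! : K) * α j ^ (N - m * l - μ) *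
      eval (α j) (derivative^[N - m * l - μ] (X ^ (N - m * l) * Qp l α)) := by
  rw [Pp, coeff_sub, coeff_Bj, if_neg (by omega), sub_zero, coeff_B0_mul_Ep l α μ T j N hN]
  rw [deriv_rep l α (N - m * l) (N - m * l - μ) (α j) (by omega)]
  rw [min_eq_left (by omega : m * l ≤ N)]
  rw [← Finset.sum_range_reflect]
  rw [Finset.mul_sum]
  refine Finset.sum_congr rfl fun i hi => ?_
  rw [Finset.mem_range] at hi
  rw [show m * l + 1 - 1 - i = m * l - i by omega]
  rw [show m * l - (m * l - i) = i by omega]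
  rw [show N - (m * l - i) = N - m * l + i by omega]
  rw [show N - m * l + i - (N - m * l - μ) = i + μ by omega]
  rw [show N - m * l + i = (N - m * l - μ) + (i + μ) by omega, pow_add]
  ring

lemma coeff_Pp_vanish (T μ : ℕ) (j : Fin m) (N : ℕ) (hN : N ≤ T)
    (hup : N < m * l + μ + l) : (Pp l α T μ j).coeff N = 0 := by
  rcases lt_or_ge N (m * l + μ) with h | h
  · exact coeff_Pp_low l α T μ j N hN h
  · rw [coeff_Pp_mid l α T μ j N hN h]
    rw [eval_iter_deriv_zero ((dvd_Qp l α j).mul_left _) (by omega : N - m * l - μ < l)]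
    ring

noncomputable def rr (μ : ℕ) (j : Fin m) : K :=
  ((m * l + μ)! : K) * α j ^ l * ((l ! : K) * (α j ^ (μ + l) * eval (α j) (gj l α j)))

lemma coeff_Pp_value (T μ : ℕ) (j : Fin m) (hT : m * l + μ + l ≤ T) :
    (Pp l α T μ j).coeff (m * l + μ + l) = rr l α μ j := by
  rw [coeff_Pp_mid l α T μ j _ hT (by omega)]
  rw [show m * l + μ + l - m * l - μ = l by omega]
  rw [show m * l + μ + l - m * l = μ + l by omega]
  have hfac : X ^ (μ + l) * Qp l α = (X - C (α j)) ^ l * (X ^ (μ + l) * gj l α j) := by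
    rw [Qp_factor l α j]; ring
  rw [hfac, eval_iter_deriv_top, eval_mul, eval_pow, eval_X, rr]

lemma rr_ne_zero (hα0 : ∀ i, α i ≠ 0) (hinj : Function.Injective α) (μ : ℕ) (j : Fin m) :
    rr l α μ j ≠ 0 := by
  rw [rr, eval_gj]
  refine mul_ne_zero (mul_ne_zero ?_ (pow_ne_zero _ (hα0 j)))
    (mul_ne_zero ?_ (mul_ne_zero (pow_ne_zero _ (hα0 j)) (mul_ne_zero ?_ ?_)))
  · exact_mod_cast Nat.factorial_ne_zero _
  · exact_mod_cast Nat.factorial_ne_zero _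
  · exact pow_ne_zero _ (by norm_num)
  · refine Finset.prod_ne_zero_iff.mpr fun i hi => pow_ne_zero _ (sub_ne_zero.mpr ?_)
    exact fun hc => (Finset.mem_erase.mp hi).1 (hinj hc)

lemma X_pow_dvd_Pp (T μ : ℕ) (j : Fin m) :
    (X : K[X]) ^ (min (m * l + μ + l) (T + 1)) ∣ Pp l α T μ j := by
  rw [X_pow_dvd_iff]
  intro d hd
  exact coeff_Pp_vanish l α T μ j d (by omega) (by omega)

noncomputable def Mp : Matrix (Fin (m + 1)) (Fin (m + 1)) K[X] :=
  Matrix.of fun μ j => Fin.cases (B0 l α (μ : ℕ)) (fun j' => Bj l α (μ : ℕ) j') j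

noncomputable def Um (T : ℕ) : Matrix (Fin (m + 1)) (Fin (m + 1)) K[X] :=
  Matrix.of fun k j =>
    Fin.cases (if k = 0 then 1 else 0)
      (fun j' => if k = 0 then Ep α T j' else if k = Fin.succ j' then -1 else 0) j

noncomputable def Mp' (T : ℕ) : Matrix (Fin (m + 1)) (Fin (m + 1)) K[X] :=
  Matrix.of fun μ j => Fin.cases (B0 l α (μ : ℕ)) (fun j' => Pp l α T (μ : ℕ) j') j

lemma Mp_mul_Um (T : ℕ) : Mp l α * Um α T = Mp' l α T := by
  classical
  ext μ j
  rw [Matrix.mul_apply]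
  refine Fin.cases ?_ (fun j' => ?_) j
  · rw [Fin.sum_univ_succ]
    simp [Mp, Um, Mp', Fin.succ_ne_zero]
  · rw [Fin.sum_univ_succ]
    simp only [Mp, Um, Mp', Matrix.of_apply, Fin.cases_zero, Fin.cases_succ, if_pos rfl,
      if_neg (Fin.succ_ne_zero _)]
    simp only [mul_ite, mul_neg_one, mul_zero, Fin.succ_inj]
    rw [Finset.sum_ite_eq' Finset.univ j' (fun k' => -(Bj l α (μ : ℕ) k'))]
    simp only [Finset.mem_univ, if_pos]
    rw [Pp]
    ring

lemma det_Um (T : ℕ) : (Um α T).det = (-1 : K[X]) ^ m := by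
  classical
  have h : (Um α T).BlockTriangular id := by
    intro i j hij
    simp only [id] at hij
    revert hij
    refine Fin.cases ?_ (fun j' => ?_) j <;> intro hij
    · simp only [Um, Matrix.of_apply, Fin.cases_zero]
      rw [if_neg (fun h0 => absurd (h0 ▸ hij) (lt_irrefl _))]
    · simp only [Um, Matrix.of_apply, Fin.cases_succ]
      rw [if_neg (fun h0 => absurd (h0 ▸ hij) (by simp [Fin.lt_def])),
        if_neg (fun h0 => absurd (h0 ▸ hij) (lt_irrefl _))]
  rw [Matrix.det_of_upperTriangular h]
  rw [Fin.prod_univ_succ]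
  simp only [Um, Matrix.of_apply, Fin.cases_zero, Fin.cases_succ, if_pos rfl,
    if_neg (Fin.succ_ne_zero _)]
  rw [Finset.prod_const]
  simp

lemma natDegree_B0_le (μ : ℕ) : (B0 l α μ).natDegree ≤ m * l :=
  natDegree_sum_C_mul_X_pow_le _ _ _ (le_refl _)

lemma natDegree_Bj_le (μ : ℕ) (j : Fin m) : (Bj l α μ j).natDegree ≤ m * l + μ - 1 :=
  natDegree_sum_C_mul_X_pow_le _ _ _ (by omega)

lemma eval_one_det_Mp_ne_zero (hm : 1 ≤ m) (hl : 1 ≤ l)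
    (hα0 : ∀ i, α i ≠ 0) (hinj : Function.Injective α) :
    eval 1 (Mp l α).det ≠ 0 := by
  classical
  set D : ℕ := ∑ i : Fin m, (m * l + (i : ℕ) + l) with hDdef
  have hS1 : ∀ i : Fin m, m * l + (i : ℕ) + l ≤ D := fun i =>
    Finset.single_le_sum (f := fun i : Fin m => m * l + (i : ℕ) + l)
      (fun _ _ => Nat.zero_le _) (Finset.mem_univ i)
  have hsA : ∀ (p : Fin (m + 1)) (i : Fin m),
      ((p.succAbove i) : ℕ) = (i : ℕ) ∨ ((p.succAbove i) : ℕ) = (i : ℕ) + 1 := by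
    intro p i
    rcases lt_or_ge (Fin.castSucc i) p with h | h
    · rw [Fin.succAbove_of_castSucc_lt _ _ h]; left; simp
    · rw [Fin.succAbove_of_le_castSucc _ _ h]; right; simp
  have hS2 : ∀ p : Fin (m + 1),
      D ≤ ∑ i : Fin m, min (m * l + ((p.succAbove i) : ℕ) + l) (D + 1) := by
    intro p
    conv_lhs => rw [hDdef]
    refine Finset.sum_le_sum fun i _ => le_min ?_ (by have := hS1 i; omega)
    rcases hsA p i with h | h <;> omega
  have hS3 : ∀ p : Fin (m + 1), p ≠ Fin.last m →
      D + 1 ≤ ∑ i : Fin m, min (m * l + ((p.succAbove i) : ℕ) + l) (D + 1) := by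
    intro p hp
    have hpm : (p : ℕ) < m := by
      rcases Nat.lt_or_ge (p : ℕ) m with h | h
      · exact h
      · exact absurd (Fin.ext (by have := Fin.is_le p; simp [Fin.val_last]; omega)) hp
    have hlt : ∑ i : Fin m, (m * l + (i : ℕ) + l) <
        ∑ i : Fin m, min (m * l + ((p.succAbove i) : ℕ) + l) (D + 1) := by
      refine Finset.sum_lt_sum
        (fun i _ => le_min (by rcases hsA p i with h | h <;> omega)
          (by have := hS1 i; omega))
        ⟨⟨(p : ℕ), hpm⟩, Finset.mem_univ _, by
          have hval : ((p.succAbove ⟨(p : ℕ), hpm⟩) : ℕ) = (p : ℕ) + 1 := by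
            rw [Fin.succAbove_of_le_castSucc _ _ (by rw [Fin.le_def]; simp)]
            simp
          have hS1' := hS1 ⟨(p : ℕ), hpm⟩
          simp only [Fin.val_mk] at hS1' ⊢
          rw [hval]
          omega⟩
    omega
  set Am := Mp' l α D with hAm
  have hminor_entry : ∀ (p : Fin (m + 1)) (i j : Fin m),
      (Am.submatrix p.succAbove Fin.succ) i j = Pp l α D ((p.succAbove i) : ℕ) j := by
    intro p i j
    simp [hAm, Mp', Matrix.submatrix_apply]
  have hdvd_minor : ∀ p : Fin (m + 1),
      (X : K[X]) ^ D ∣ (Am.submatrix p.succAbove Fin.succ).det := by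
    intro p
    have h := det_dvd_of_row_dvd
      (fun i => (X : K[X]) ^ min (m * l + ((p.succAbove i) : ℕ) + l) (D + 1))
      (Am.submatrix p.succAbove Fin.succ)
      (fun i j => by rw [hminor_entry]; exact X_pow_dvd_Pp l α D _ j)
    rw [Finset.prod_pow_eq_pow_sum] at h
    exact (pow_dvd_pow _ (hS2 p)).trans h
  have hdvd_minor' : ∀ p : Fin (m + 1), p ≠ Fin.last m →
      (X : K[X]) ^ (D + 1) ∣ (Am.submatrix p.succAbove Fin.succ).det := by
    intro p hp
    have h := det_dvd_of_row_dvd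
      (fun i => (X : K[X]) ^ min (m * l + ((p.succAbove i) : ℕ) + l) (D + 1))
      (Am.submatrix p.succAbove Fin.succ)
      (fun i j => by rw [hminor_entry]; exact X_pow_dvd_Pp l α D _ j)
    rw [Finset.prod_pow_eq_pow_sum] at h
    exact (pow_dvd_pow _ (hS3 p hp)).trans h
  have hdvdq : ∀ (i : Fin m) (j : Fin m), ∃ q : K[X],
      Pp l α D (i : ℕ) j = X ^ (m * l + (i : ℕ) + l) * q := by
    intro i j
    have h := X_pow_dvd_Pp l α D (i : ℕ) j
    rw [min_eq_left (by have := hS1 i; omega)] at h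
    exact h
  choose g hg using hdvdq
  have hsub_last : Am.submatrix (Fin.last m).succAbove Fin.succ =
      Matrix.of fun i j =>
        (fun i : Fin m => (X : K[X]) ^ (m * l + (i : ℕ) + l)) i * Matrix.of g i j := by
    refine Matrix.ext fun i j => ?_
    rw [hminor_entry, Fin.succAbove_last, Fin.coe_castSucc]
    simpa using hg i j
  have hdet_last : (Am.submatrix (Fin.last m).succAbove Fin.succ).det =
      X ^ D * (Matrix.of g).det := by
    rw [hsub_last, Matrix.det_mul_column, Finset.prod_pow_eq_pow_sum, ← hDdef]
  have heval0_B0 : ∀ μ : ℕ, eval 0 (B0 l α μ) = (Qp l α).coeff (m * l) := by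
    intro μ
    rw [← coeff_zero_eq_eval_zero, coeff_B0, if_pos (by omega)]
    rw [Nat.sub_zero, div_self (by exact_mod_cast factorial_ne_zero (m * l + μ)), mul_one]
  have hσn : (Qp l α : K[X]).coeff (m * l) ≠ 0 := by
    rw [show m * l = (Qp l α : K[X]).natDegree from (natDegree_Qp l α).symm, coeff_natDegree]
    exact leadingCoeff_ne_zero.mpr (Qp_ne_zero l α)
  have hrr_det : (Matrix.of fun (i j : Fin m) => rr l α (i : ℕ) j).det ≠ 0 := by
    have hfac : (Matrix.of fun (i j : Fin m) => rr l α (i : ℕ) j) =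
        Matrix.of fun i j => (fun i : Fin m => ((m * l + (i : ℕ))! : K)) i *
          (Matrix.of fun (i j : Fin m) =>
            (fun j : Fin m => (l ! : K) * α j ^ (2 * l) * eval (α j) (gj l α j)) j *
            (Matrix.of fun (i j : Fin m) => α j ^ (i : ℕ)) i j) i j := by
      refine Matrix.ext fun i j => ?_
      simp only [Matrix.of_apply]
      rw [rr, two_mul, pow_add, pow_add]
      ring
    rw [hfac, Matrix.det_mul_column, Matrix.det_mul_row]
    have hvdm : (Matrix.of fun (i j : Fin m) => α j ^ (i : ℕ)).det ≠ 0 := by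
      have htr : (Matrix.of fun (i j : Fin m) => α j ^ (i : ℕ)) =
          (Matrix.vandermonde α).transpose := by
        refine Matrix.ext fun i j => ?_
        simp [Matrix.vandermonde, Matrix.transpose_apply]
      rw [htr, Matrix.det_transpose]
      exact Matrix.det_vandermonde_ne_zero_iff.mpr hinj
    refine mul_ne_zero (Finset.prod_ne_zero_iff.mpr fun i _ => ?_)
      (mul_ne_zero (Finset.prod_ne_zero_iff.mpr fun j _ => ?_) hvdm)
    · exact_mod_cast factorial_ne_zero _
    · rw [eval_gj]
      refine mul_ne_zero (mul_ne_zero ?_ (pow_ne_zero _ (hα0 j)))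
        (mul_ne_zero (pow_ne_zero _ (by norm_num)) ?_)
      · exact_mod_cast factorial_ne_zero _
      · exact Finset.prod_ne_zero_iff.mpr fun i hi => pow_ne_zero _
          (sub_ne_zero.mpr fun hc => (Finset.mem_erase.mp hi).1 (hinj hc))
  have hLap := Matrix.det_succ_column_zero Am
  have hAm0 : ∀ p : Fin (m + 1), Am p 0 = B0 l α (p : ℕ) := by
    intro p; simp [hAm, Mp']
  have hcoeff_last : ((-1 : K[X]) ^ ((Fin.last m : ℕ)) * Am (Fin.last m) 0 *
      (Am.submatrix (Fin.last m).succAbove Fin.succ).det).coeff D =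
      (-1 : K) ^ m * ((Qp l α).coeff (m * l) *
        (Matrix.of fun (i j : Fin m) => rr l α (i : ℕ) j).det) := by
    rw [hdet_last, Fin.val_last, hAm0]
    have hrw : (-1 : K[X]) ^ m * B0 l α ((Fin.last m : ℕ)) * (X ^ D * (Matrix.of g).det) =
        X ^ D * ((-1 : K[X]) ^ m * B0 l α ((Fin.last m : ℕ)) * (Matrix.of g).det) := by ring
    rw [hrw]
    have hcoeffXD := coeff_X_pow_mul
      ((-1 : K[X]) ^ m * B0 l α ((Fin.last m : ℕ)) * (Matrix.of g).det) D 0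
    rw [zero_add] at hcoeffXD
    rw [hcoeffXD, coeff_zero_eq_eval_zero, eval_mul, eval_mul, eval_pow, eval_neg, eval_one,
      Fin.val_last, heval0_B0]
    have hevg : eval 0 (Matrix.of g).det =
        (Matrix.of fun (i j : Fin m) => rr l α (i : ℕ) j).det := by
      have hmap := RingHom.map_det (evalRingHom (0 : K)) (Matrix.of g)
      rw [show (evalRingHom (0 : K)) (Matrix.of g).det = eval 0 (Matrix.of g).det from rfl]
        at hmap
      rw [hmap]
      congr 1
      refine Matrix.ext fun i j => ?_
      rw [RingHom.mapMatrix_apply, Matrix.map_apply]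
      rw [show (evalRingHom (0 : K)) (Matrix.of g i j) = eval 0 (g i j) from rfl]
      rw [← coeff_zero_eq_eval_zero]
      have h1 : (Pp l α D (i : ℕ) j).coeff (m * l + (i : ℕ) + l) = (g i j).coeff 0 := by
        rw [hg i j]
        have h2 := coeff_X_pow_mul (g i j) (m * l + (i : ℕ) + l) 0
        rw [zero_add] at h2
        rw [h2]
      rw [← h1, coeff_Pp_value l α D (i : ℕ) j (hS1 i)]
      simp
    rw [hevg]
    ring
  have hcD : Am.det.coeff D ≠ 0 := by
    have h1 : Am.det.coeff D = ∑ p : Fin (m + 1), ((-1 : K[X]) ^ (p : ℕ) * Am p 0 *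
        (Am.submatrix p.succAbove Fin.succ).det).coeff D := by
      conv_lhs => rw [hLap]
      rw [finset_sum_coeff]
    rw [h1, Finset.sum_eq_single (Fin.last m)]
    · rw [hcoeff_last]
      exact mul_ne_zero (pow_ne_zero _ (by norm_num)) (mul_ne_zero hσn hrr_det)
    · intro p _ hp
      have hdvd := (hdvd_minor' p hp).mul_left ((-1 : K[X]) ^ (p : ℕ) * Am p 0)
      exact X_pow_dvd_iff.mp hdvd D (by omega)
    · intro h; exact absurd (Finset.mem_univ _) h
  have hXD : (X : K[X]) ^ D ∣ Am.det := by
    rw [hLap]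
    exact Finset.dvd_sum fun p _ => ((hdvd_minor p).mul_left _)
  have hMU : Am.det = (Mp l α).det * (-1 : K[X]) ^ m := by
    rw [hAm, ← Mp_mul_Um l α D, Matrix.det_mul, det_Um]
  have hdegMp : (Mp l α).det.natDegree ≤ D := by
    have hrows : ∀ (μ : Fin (m + 1)) (j : Fin (m + 1)), ((Mp l α) μ j).natDegree ≤
        (fun μ : Fin (m + 1) => if (μ : ℕ) = 0 then m * l else m * l + (μ : ℕ) - 1) μ := by
      intro μ j
      have hml : 1 ≤ m * l := Nat.one_le_iff_ne_zero.mpr (by positivity)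
      refine Fin.cases ?_ (fun j' => ?_) j
      · simp only [Mp, Matrix.of_apply, Fin.cases_zero]
        exact (natDegree_B0_le l α _).trans (by split <;> omega)
      · simp only [Mp, Matrix.of_apply, Fin.cases_succ]
        exact (natDegree_Bj_le l α _ _).trans (by split <;> omega)
    refine (natDegree_det_le _ (Mp l α) hrows).trans ?_
    rw [Fin.sum_univ_succ]
    simp only [Fin.val_zero, Fin.val_succ, reduceIte]
    have hsum1 : ∑ i : Fin m, (if (i : ℕ) + 1 = 0 then m * l else m * l + ((i : ℕ) + 1) - 1)
        = ∑ i : Fin m, (m * l + (i : ℕ)) :=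
      Finset.sum_congr rfl fun i _ => by rw [if_neg (by omega)]; omega
    have hsum2 : ∑ i : Fin m, (m * l + (i : ℕ) + l)
        = (∑ i : Fin m, (m * l + (i : ℕ))) + m * l := by
      rw [Finset.sum_add_distrib, Finset.sum_const, Finset.card_univ, Fintype.card_fin,
        smul_eq_mul]
    rw [hsum1, hDdef, hsum2]
    omega
  have hdegAm : Am.det.natDegree ≤ D := by
    rw [hMU]
    refine natDegree_mul_le.trans ?_
    have h2 : ((-1 : K[X]) ^ m).natDegree = 0 := by
      rw [natDegree_pow, natDegree_neg, natDegree_one, mul_zero]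
    omega
  have hform : Am.det = C (Am.det.coeff D) * X ^ D := by
    ext N
    rcases lt_trichotomy N D with h | h | h
    · rw [X_pow_dvd_iff.mp hXD N h, coeff_C_mul, coeff_X_pow, if_neg (by omega), mul_zero]
    · subst h; rw [coeff_C_mul, coeff_X_pow, if_pos rfl, mul_one]
    · rw [coeff_eq_zero_of_natDegree_lt (lt_of_le_of_lt hdegAm h), coeff_C_mul, coeff_X_pow,
        if_neg (by omega), mul_zero]
  intro hzero
  have heval : eval 1 Am.det = Am.det.coeff D := by
    rw [hform]; simp
  apply hcD
  rw [← heval, hMU, eval_mul, hzero, zero_mul]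


end Stmt10

/-- with `b_{l,μ,i} = B_{l,μ,i}(1)` the values at `t = 1` of the Padé
polynomials for Euler's series at pairwise distinct nonzero `α₁,…,α_m`, and
`W(l,μ) = λ₀ b_{l,μ,0} + … + λ_m b_{l,μ,m}` where not all `λ_i` vanish,
for every `l ≥ 1` there is some `μ ∈ {0,…,m}` with `W(l,μ) ≠ 0`. -/
theorem exists_mu_W_ne_zero {K : Type*} [Field K] [CharZero K]
    {m : ℕ} (hm : 1 ≤ m) (α : Fin m → K) (hα0 : ∀ i, α i ≠ 0)
    (hinj : Function.Injective α)
    (lam : Fin (m + 1) → K) (hlam : ∃ i, lam i ≠ 0)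
    (l : ℕ) (hl : 1 ≤ l)
    (σ : ℕ → K)
    (hσ : ∀ i, σ i = (∏ j, (C (α j) - X) ^ l).coeff i)
    (b0 : ℕ → K)
    (hb0 : ∀ μ, b0 μ = ∑ i ∈ range (m * l + 1),
        σ i * (((m * l + μ)! : K) / ((i + μ)! : K)))
    (bj : ℕ → Fin m → K)
    (hbj : ∀ μ j, bj μ j = (((m * l + μ)! : ℕ) : K) *
        ∑ N ∈ range (m * l + μ), ∑ h ∈ range (min (m * l) N + 1),
          σ (m * l - h) * (((N - h)! : K) / ((m * l - h + μ)! : K)) * (α j) ^ (N - h))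
    (W : ℕ → K)
    (hW : ∀ μ, W μ = lam 0 * b0 μ + ∑ j : Fin m, lam j.succ * bj μ j) :
    ∃ μ ≤ m, W μ ≠ 0 := by
  classical
  by_contra hcon
  push_neg at hcon
  have hQσ : ∀ i, (Stmt10.Qp l α : K[X]).coeff i = σ i := by
    intro i; rw [hσ i, Stmt10.Qp]
  have hb0' : ∀ μ : ℕ, eval 1 (Stmt10.B0 l α μ) = b0 μ := by
    intro μ
    rw [Stmt10.B0, eval_finset_sum, hb0 μ]
    rw [← Finset.sum_range_reflect
      (fun i => σ i * (((m * l + μ)! : K) / ((i + μ)! : K))) (m * l + 1)]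
    refine Finset.sum_congr rfl fun h hh => ?_
    rw [Finset.mem_range] at hh
    rw [eval_mul, eval_C, eval_pow, eval_X, one_pow, mul_one]
    rw [show m * l + 1 - 1 - h = m * l - h by omega, hQσ]
  have hbj' : ∀ (μ : ℕ) (j : Fin m), eval 1 (Stmt10.Bj l α μ j) = bj μ j := by
    intro μ j
    rw [Stmt10.Bj, eval_finset_sum, hbj μ j, Finset.mul_sum]
    refine Finset.sum_congr rfl fun N hN => ?_
    rw [eval_mul, eval_C, eval_pow, eval_X, one_pow, mul_one]
    congr 1
    exact Finset.sum_congr rfl fun h hh => by rw [hQσ]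
  have hdet := Stmt10.eval_one_det_Mp_ne_zero l α hm hl hα0 hinj
  set Mv : Matrix (Fin (m + 1)) (Fin (m + 1)) K :=
    (Stmt10.Mp l α).map (eval 1) with hMv
  have hdetv : Mv.det ≠ 0 := by
    have hmap := RingHom.map_det (evalRingHom (1 : K)) (Stmt10.Mp l α)
    rw [RingHom.mapMatrix_apply] at hmap
    rw [hMv, show ((Stmt10.Mp l α).map (eval 1)) =
      (Stmt10.Mp l α).map (evalRingHom (1 : K)) from rfl, ← hmap]
    exact hdet
  have hmul : Mv.mulVec lam = 0 := by
    funext μ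
    have hexpr : lam 0 * b0 (μ : ℕ) + ∑ j' : Fin m, lam j'.succ * bj (μ : ℕ) j' = 0 := by
      rw [← hW (μ : ℕ)]; exact hcon (μ : ℕ) (Fin.is_le μ)
    simp only [Matrix.mulVec, dotProduct, Pi.zero_apply]
    rw [Fin.sum_univ_succ]
    have h0 : Mv μ 0 = b0 (μ : ℕ) := by
      rw [hMv, Matrix.map_apply]
      simp only [Stmt10.Mp, Matrix.of_apply, Fin.cases_zero]
      exact hb0' _
    have hsucc : ∀ j' : Fin m, Mv μ j'.succ = bj (μ : ℕ) j' := by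
      intro j'
      rw [hMv, Matrix.map_apply]
      simp only [Stmt10.Mp, Matrix.of_apply, Fin.cases_succ]
      exact hbj' _ _
    rw [h0, Finset.sum_congr rfl (fun j' _ => by rw [hsucc j'])]
    rw [show b0 (μ : ℕ) * lam 0 + ∑ j' : Fin m, bj (μ : ℕ) j' * lam j'.succ
        = lam 0 * b0 (μ : ℕ) + ∑ j' : Fin m, lam j'.succ * bj (μ : ℕ) j' from by
      rw [mul_comm]
      exact congrArg _ (Finset.sum_congr rfl fun j' _ => mul_comm _ _)]
    exact hexpr
  have hlam0 := Matrix.eq_zero_of_mulVec_eq_zero hdetv hmul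
  obtain ⟨i, hi⟩ := hlam
  exact hi (congrFun hlam0 i)
end

section
/- Let z(y) denote the inverse function of y(z) = z·log z for z ≥ 1/e. If y ≥ r·e^r where r ≥ e, then z(y) ≤ (1 + (log r)/r) · y / log y. -/
/-!
Write `u = log z(y)`, so that `y = z u` and `log y = u + log u`. Since `t ↦ t log t` is increasing,
`y ≥ r e^r` forces `u ≥ r ≥ e`, and as `log t / t` decreases on `[e, ∞)` we get
`log u ≤ (log r / r) u`. Hence `log y ≤ (1 + log r / r) u`, which is the bound `z = y / u`.
-/

open Real

lemma Real.log_le_log_div_self_mul {r u : ℝ} (hr : exp 1 ≤ r) (hru : r ≤ u) :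
    log u ≤ log r / r * u := by
  have hr₀ : 0 < r := (exp_pos 1).trans_le hr
  have hu₀ : 0 < u := hr₀.trans_le hru
  have h := log_div_self_antitoneOn hr (hr.trans hru) hru
  rwa [div_le_iff₀ hu₀] at h

lemma Real.exp_le_of_mul_exp_le_mul_log {r z : ℝ} (hr : -1 ≤ r) (hz : exp (-1) ≤ z)
    (h : r * exp r ≤ z * log z) : exp r ≤ z := by
  have hmono := mul_log_strictMonoOn.le_iff_le (exp_le_exp.2 hr) hz
  rwa [← hmono, log_exp, mul_comm]

lemma Real.le_mul_div_log_of_le_log {r z : ℝ} (hr : exp 1 ≤ r) (hz : 0 < z) (hrz : r ≤ log z) :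
    z ≤ (1 + log r / r) * (z * log z) / log (z * log z) := by
  have hr₀ : 0 < r := (exp_pos 1).trans_le hr
  have hu : 0 < log z := hr₀.trans_le hrz
  have hlogy : log (z * log z) = log z + log (log z) := log_mul hz.ne' hu.ne'
  have hloglog : 0 ≤ log (log z) := log_nonneg (by linarith [add_one_le_exp 1])
  have hkey : log (z * log z) ≤ (1 + log r / r) * log z := by
    rw [hlogy]
    linarith [log_le_log_div_self_mul hr hrz]
  rw [le_div_iff₀ (by rw [hlogy]; positivity)]
  calc z * log (z * log z) ≤ z * ((1 + log r / r) * log z) := by gcongr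
    _ = _ := by ring

/-- Let `z(y)` be the inverse of `y(z) = z·log z` for `z ≥ 1/e`.
If `y ≥ r·e^r` with `r ≥ e`, then `z(y) ≤ (1 + log r / r) · y / log y`.
(Formulated without the inverse function: any `z ≥ 1/e` with `z·log z = y`
satisfies the bound.) -/
theorem inverse_z_upper_bound (r y z : ℝ)
    (hr : Real.exp 1 ≤ r) (hy : r * Real.exp r ≤ y)
    (hz : 1 / Real.exp 1 ≤ z) (hzy : z * Real.log z = y) :
    z ≤ (1 + Real.log r / r) * y / Real.log y := by
  subst hzy
  have hr₁ : -1 ≤ r := by linarith [add_one_le_exp 1]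
  rw [one_div, ← exp_neg] at hz
  have hz₀ : 0 < z := (exp_pos _).trans_le hz
  have hrz : r ≤ log z := (le_log_iff_exp_le hz₀).2 (exp_le_of_mul_exp_le_mul_log hr₁ hz hy)
  exact le_mul_div_log_of_le_log hr hz₀ hrz
end

section
/- Let K be a number field, α_1,…,α_m ∈ K, l ≥ 1, μ ∈ {0,1,…,m}, and let σ_i be defined by Π_{j=1}^m (α_j − w)^l = Σ_{i=0}^{ml} σ_i w^i. Set b_{l,μ,0} = Σ_{i=0}^{ml} σ_i · (ml+μ)!/(i+μ)!. Then for every Archimedean normalized absolute value ‖·‖_v of K, ‖b_{l,μ,0}‖_v ≤ ‖(ml)! · C(ml+μ, μ)‖_v · Π_{j=1}^m (‖α_j‖_v + 1)^l. -/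
/-!
In any absolute value `|·|`, the coefficients of `∏ j, (α j - X) ^ l` are dominated termwise by
those of `∏ j, (X + |α j|) ^ l`, whose coefficient sum is `∏ j, (|α j| + 1) ^ l`; and each factor
`(ml+μ)!/(i+μ)!` is an integer at most `(ml)! · C(ml+μ, μ)`. For an Archimedean place
`|n| = n`, and passing to the normalised value `|·| ^ e`, `0 < e ≤ 1`, keeps the bound since
`(t + 1) ^ e ≤ t ^ e + 1`.
-/

open Polynomial Finset Nat NumberField

/-- The paper's normalised absolute value attached to an Archimedean place `w` of a
number field `K` of degree `κ`:  `‖x‖_w = (w x) ^ (mult w / κ)`. -/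
noncomputable def infNorm (K : Type*) [Field K] [NumberField K]
    (w : InfinitePlace K) (x : K) : ℝ :=
  (w x) ^ ((w.mult : ℝ) / (Module.finrank ℚ K : ℝ))

section Majorant

variable {R : Type*} [CommRing R] (abv : AbsoluteValue R ℝ)

theorem AbsoluteValue.coeff_mul_le {p q : R[X]} {P Q : ℝ[X]}
    (hp : ∀ i, abv (p.coeff i) ≤ P.coeff i) (hq : ∀ i, abv (q.coeff i) ≤ Q.coeff i) (k : ℕ) :
    abv ((p * q).coeff k) ≤ (P * Q).coeff k := by
  rw [coeff_mul, coeff_mul]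
  refine (abv.sum_le _ _).trans (sum_le_sum fun ij _ => ?_)
  rw [abv.map_mul]
  exact mul_le_mul (hp _) (hq _) (abv.nonneg _) ((abv.nonneg _).trans (hp _))

theorem AbsoluteValue.coeff_prod_le [Nontrivial R] {ι : Type*} (s : Finset ι)
    {p : ι → R[X]} {P : ι → ℝ[X]} (h : ∀ j ∈ s, ∀ i, abv ((p j).coeff i) ≤ (P j).coeff i)
    (i : ℕ) : abv ((∏ j ∈ s, p j).coeff i) ≤ (∏ j ∈ s, P j).coeff i := by
  classical
  induction s using Finset.induction generalizing i with
  | empty => rcases i with _ | i <;> simp [coeff_one]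
  | insert a s ha ih =>
    rw [prod_insert ha, prod_insert ha]
    exact abv.coeff_mul_le (h a (mem_insert_self a s))
      (ih fun j hj => h j (mem_insert_of_mem hj)) i

theorem AbsoluteValue.coeff_C_sub_X_pow_le [Nontrivial R] (a : R) (l i : ℕ) :
    abv (((C a - X) ^ l).coeff i) ≤ ((X + C (abv a)) ^ l).coeff i := by
  have hlin (i : ℕ) : abv ((C a - X).coeff i) ≤ (X + C (abv a)).coeff i := by
    rcases i with _ | _ | i <;> simp [coeff_X, coeff_C]
  simpa using abv.coeff_prod_le (range l) (fun _ _ => hlin) i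

theorem AbsoluteValue.sum_range_coeff_le_eval_one {p : R[X]} {P : ℝ[X]} {n : ℕ}
    (h : ∀ i, abv (p.coeff i) ≤ P.coeff i) (hP : P.natDegree ≤ n) :
    ∑ i ∈ range (n + 1), abv (p.coeff i) ≤ P.eval 1 := by
  rw [eval_eq_sum_range' (Nat.lt_succ_of_le hP)]
  simpa using sum_le_sum fun i _ => h i

end Majorant

theorem AbsoluteValue.factorial_div_factorial_le {K : Type*} [Field K] [CharZero K]
    (abv : AbsoluteValue K ℝ) {n i : ℕ} (hi : i ≤ n) (μ : ℕ) :
    abv (((n + μ)! : K) / (i + μ)!) ≤ ((n ! * (n + μ).choose μ : ℕ) : ℝ) := by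
  rw [← Nat.cast_div (Nat.factorial_dvd_factorial (by omega))
    (Nat.cast_ne_zero.mpr (Nat.factorial_ne_zero _))]
  refine (abv.apply_nat_le_self _).trans (Nat.cast_le.mpr ?_)
  calc (n + μ)! / (i + μ)! ≤ (n + μ)! / μ ! :=
        Nat.div_le_div_left (Nat.factorial_le (by omega)) (Nat.factorial_pos _)
    _ = n ! * (n + μ).choose μ := by
        refine Nat.div_eq_of_eq_mul_left (Nat.factorial_pos _) ?_
        rw [← Nat.add_choose_mul_factorial_mul_factorial n μ]
        ring

theorem AbsoluteValue.sum_coeff_mul_factorial_div_le {K : Type*} [Field K] [CharZero K]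
    (abv : AbsoluteValue K ℝ) {m : ℕ} (α : Fin m → K) (l μ : ℕ) :
    abv (∑ i ∈ range (m * l + 1),
        (∏ j, (C (α j) - X) ^ l).coeff i * (((m * l + μ)! : K) / ((i + μ)! : K)))
      ≤ (((m * l)! * (m * l + μ).choose μ : ℕ) : ℝ) * ∏ j, (abv (α j) + 1) ^ l := by
  set N : ℝ := (((m * l)! * (m * l + μ).choose μ : ℕ) : ℝ)
  set p : K[X] := ∏ j, (C (α j) - X) ^ l
  set P : ℝ[X] := ∏ j, (X + C (abv (α j))) ^ l
  have hmajor (i : ℕ) : abv (p.coeff i) ≤ P.coeff i :=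
    abv.coeff_prod_le univ (fun j _ => abv.coeff_C_sub_X_pow_le (α j) l) i
  have hdeg : P.natDegree ≤ m * l := by
    refine (natDegree_prod_le _ _).trans ?_
    simp [natDegree_pow]
  have hP1 : P.eval 1 = ∏ j, (abv (α j) + 1) ^ l := by
    simp [P, eval_prod, add_comm]
  calc _ ≤ ∑ i ∈ range (m * l + 1), abv (p.coeff i) * N := by
        refine (abv.sum_le _ _).trans (sum_le_sum fun i hi => ?_)
        rw [abv.map_mul]
        exact mul_le_mul_of_nonneg_left
          (abv.factorial_div_factorial_le (Nat.lt_succ_iff.mp (mem_range.mp hi)) μ)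
          (abv.nonneg _)
    _ = N * ∑ i ∈ range (m * l + 1), abv (p.coeff i) := by rw [← sum_mul, mul_comm]
    _ ≤ N * P.eval 1 := by
        gcongr
        exact abv.sum_range_coeff_le_eval_one hmajor hdeg
    _ = _ := by rw [hP1]

section infNorm

variable {K : Type*} [Field K] [NumberField K] (v : InfinitePlace K)

theorem NumberField.InfinitePlace.mult_div_finrank_pos :
    0 < (v.mult : ℝ) / Module.finrank ℚ K :=
  div_pos (by exact_mod_cast v.mult_pos) (by exact_mod_cast Module.finrank_pos)

theorem NumberField.InfinitePlace.mult_div_finrank_le_one :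
    (v.mult : ℝ) / Module.finrank ℚ K ≤ 1 := by
  refine div_le_one_of_le₀ ?_ (Nat.cast_nonneg _)
  rw [← InfinitePlace.sum_mult_eq]
  exact_mod_cast single_le_sum (fun w _ => Nat.zero_le (InfinitePlace.mult w)) (mem_univ v)

-- `t ↦ t ^ e` is multiplicative, and subadditive because `e = mult v / [K : ℚ] ≤ 1`.
theorem infNorm_le_of_le {ι : Type*} (s : Finset ι) {x y : K} {a : ι → K} {l : ℕ}
    (h : v x ≤ v y * ∏ j ∈ s, (v (a j) + 1) ^ l) :
    infNorm K v x ≤ infNorm K v y * ∏ j ∈ s, (infNorm K v (a j) + 1) ^ l := by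
  have he := v.mult_div_finrank_pos
  have he1 := v.mult_div_finrank_le_one
  set e : ℝ := (v.mult : ℝ) / Module.finrank ℚ K
  have hadd (j : ι) : (v (a j) + 1) ^ e ≤ infNorm K v (a j) + 1 := by
    simpa [infNorm] using Real.rpow_add_le_add_rpow (apply_nonneg v (a j)) zero_le_one he.le he1
  calc v x ^ e ≤ (v y * ∏ j ∈ s, (v (a j) + 1) ^ l) ^ e :=
        Real.rpow_le_rpow (apply_nonneg v x) h he.le
    _ = v y ^ e * ∏ j ∈ s, ((v (a j) + 1) ^ e) ^ l := by
        rw [Real.mul_rpow (apply_nonneg v y) (by positivity),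
          ← Real.finsetProd_rpow _ _ (fun j _ => by positivity)]
        congr 1
        exact prod_congr rfl fun j _ => (Real.rpow_pow_comm (by positivity) e l).symm
    _ ≤ infNorm K v y * ∏ j ∈ s, (infNorm K v (a j) + 1) ^ l := by
        unfold infNorm
        gcongr with j
        exact hadd j

end infNorm

theorem pade_b0_archimedean_bound_general {K : Type*} [Field K] [NumberField K]
    {m : ℕ} (α : Fin m → K) (l μ : ℕ)
    (σ : ℕ → K)
    (hσ : ∀ i, σ i = (∏ j, (C (α j) - X) ^ l).coeff i)
    (v : InfinitePlace K) :
    infNorm K v (∑ i ∈ range (m * l + 1),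
        σ i * (((m * l + μ)! : K) / ((i + μ)! : K)))
      ≤ infNorm K v ((((m * l)! * (m * l + μ).choose μ : ℕ)) : K) *
          ∏ j, (infNorm K v (α j) + 1) ^ l := by
  refine infNorm_le_of_le v univ ?_
  rw [v.map_natCast]
  simp only [hσ]
  exact v.1.sum_coeff_mul_factorial_div_le α l μ

/-- with `σ_i` defined by `∏ j, (α j − w)^l = ∑ i, σ i * w^i` and
`b_{l,μ,0} = ∑_{i=0}^{ml} σ i · (ml+μ)!/(i+μ)!`, for every Archimedean normalised
absolute value `‖·‖_v` of `K` one has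
`‖b_{l,μ,0}‖_v ≤ ‖(ml)! · C(ml+μ, μ)‖_v · ∏ j, (‖α j‖_v + 1)^l`. -/
theorem pade_b0_archimedean_bound {K : Type*} [Field K] [NumberField K]
    {m : ℕ} (α : Fin m → K) (l μ : ℕ) (hl : 1 ≤ l) (hμ : μ ≤ m)
    (σ : ℕ → K)
    (hσ : ∀ i, σ i = (∏ j, (C (α j) - X) ^ l).coeff i)
    (v : InfinitePlace K) :
    infNorm K v (∑ i ∈ range (m * l + 1),
        σ i * (((m * l + μ)! : K) / ((i + μ)! : K)))
      ≤ infNorm K v ((((m * l)! * (m * l + μ).choose μ : ℕ)) : K) *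
          ∏ j, (infNorm K v (α j) + 1) ^ l :=
  pade_b0_archimedean_bound_general α l μ σ hσ v
end

section
/- Let K be a number field, α_1,…,α_m ∈ K, l ≥ 1, μ ∈ {0,1,…,m}, and let σ_i be defined by Π_{j=1}^m (α_j − w)^l = Σ_{i=0}^{ml} σ_i w^i. For j ∈ {1,…,m} set b_{l,μ,j} = (ml+μ)! Σ_{N=0}^{ml+μ−1} Σ_{h=0}^{min{ml,N}} σ_{ml−h} · ((N−h)!/(ml−h+μ)!) · α_j^{N−h}. Then for every Archimedean normalized absolute value ‖·‖_v of K, ‖b_{l,μ,j}‖_v ≤ ‖(ml+μ)!‖_v · (max{1, ‖α_j‖_v})^{ml} · (ml+m) · Π_{i=1}^m (‖α_i‖_v + max{1, ‖α_j‖_v})^l. -/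
open Polynomial Finset Nat NumberField

/-!
The coefficients `σ_i` of `∏ (α_i - X)^l` are majorised by those of `∏ (|α_i| + X)^l`.
In the inner sum of `b_{l,μ,j}` the factorial ratio has absolute value at most `1` and
`N - h ≤ 2ml - h`, so with `A = max 1 |α_j|` the inner sum is at most
`A^{ml} ∑_k |σ_k| A^k ≤ A^{ml} ∏ (|α_i| + A)^l`; there are `ml + μ ≤ ml + m` inner sums.
This works for every absolute value that is monotone on `ℕ`, and the normalised `‖·‖_v` is
one, being `|·|_v ^ e` with `0 < e = κ_v/κ ≤ 1`.
-/

namespace Polynomial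

section IsMajorant

variable {R : Type*} [Semiring R] {abv : AbsoluteValue R ℝ}

variable (abv) in
/-- `Q` is a majorant of `P` with respect to `abv`, in the sense of Cauchy's method of
majorants. -/
def IsMajorant (P : R[X]) (Q : ℝ[X]) : Prop :=
  ∀ k, abv (P.coeff k) ≤ Q.coeff k

theorem isMajorant_one [Nontrivial R] : IsMajorant abv 1 1 := by
  intro k
  rcases eq_or_ne k 0 with rfl | hk <;> simp [coeff_one, *]

theorem IsMajorant.mul {P₁ P₂ : R[X]} {Q₁ Q₂ : ℝ[X]} (h₁ : IsMajorant abv P₁ Q₁)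
    (h₂ : IsMajorant abv P₂ Q₂) : IsMajorant abv (P₁ * P₂) (Q₁ * Q₂) := by
  intro k
  rw [coeff_mul, coeff_mul]
  refine (abv.sum_le _ _).trans (sum_le_sum fun x _ => ?_)
  rw [map_mul]
  exact mul_le_mul (h₁ _) (h₂ _) (abv.nonneg _) ((abv.nonneg _).trans (h₁ _))

theorem IsMajorant.pow [Nontrivial R] {P : R[X]} {Q : ℝ[X]} (h : IsMajorant abv P Q) (n : ℕ) :
    IsMajorant abv (P ^ n) (Q ^ n) := by
  induction n with
  | zero => simpa using isMajorant_one
  | succ n ih => simpa only [pow_succ] using ih.mul h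

theorem IsMajorant.sum_mul_pow_le_eval {P : R[X]} {Q : ℝ[X]} (h : IsMajorant abv P Q)
    (s : Finset ℕ) {x : ℝ} (hx : 0 ≤ x) :
    ∑ k ∈ s, abv (P.coeff k) * x ^ k ≤ Q.eval x := by
  have hQ : ∀ k, 0 ≤ Q.coeff k * x ^ k := fun k =>
    mul_nonneg ((abv.nonneg _).trans (h k)) (pow_nonneg hx k)
  rw [eval_eq_sum_range' (n := Q.natDegree + s.sup id + 1) (by omega)]
  refine (sum_le_sum fun k _ => mul_le_mul_of_nonneg_right (h k) (pow_nonneg hx k)).trans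
    (sum_le_sum_of_subset_of_nonneg (fun k hk => ?_) fun k _ _ => hQ k)
  have := le_sup (f := id) hk
  simp only [id, mem_range] at this ⊢
  omega

end IsMajorant

theorem IsMajorant.prod {R : Type*} [CommSemiring R] [Nontrivial R]
    {abv : AbsoluteValue R ℝ} {ι : Type*} (s : Finset ι) {P : ι → R[X]}
    {Q : ι → ℝ[X]} (h : ∀ i ∈ s, IsMajorant abv (P i) (Q i)) :
    IsMajorant abv (∏ i ∈ s, P i) (∏ i ∈ s, Q i) := by
  induction s using Finset.cons_induction with
  | empty => simpa using isMajorant_one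
  | cons a s ha ih =>
    simp only [prod_cons]
    exact (h a (mem_cons_self a s)).mul (ih fun i hi => h i (mem_cons_of_mem hi))

theorem isMajorant_C_sub_X {R : Type*} [Ring R] [Nontrivial R] {abv : AbsoluteValue R ℝ}
    (a : R) : IsMajorant abv (C a - X) (C (abv a) + X) := by
  rintro (_ | _ | k) <;> simp [coeff_X, coeff_C]

end Polynomial

namespace AbsoluteValue

variable {R : Type*} [Semiring R] (abv : AbsoluteValue R ℝ) {e : ℝ} (he₀ : 0 < e)
  (he₁ : e ≤ 1)

noncomputable def rpow : AbsoluteValue R ℝ where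
  toFun x := abv x ^ e
  map_mul' x y := by simp only [map_mul, Real.mul_rpow (abv.nonneg x) (abv.nonneg y)]
  nonneg' x := Real.rpow_nonneg (abv.nonneg x) e
  eq_zero' x := by simp [Real.rpow_eq_zero (abv.nonneg x) he₀.ne']
  add_le' x y := (Real.rpow_le_rpow (abv.nonneg _) (abv.add_le x y) he₀.le).trans
    (Real.rpow_add_le_add_rpow (abv.nonneg _) (abv.nonneg _) he₀.le he₁)

variable {abv} in
theorem monotone_rpow_natCast (h : Monotone fun n : ℕ => abv (n : R)) :
    Monotone fun n : ℕ => abv.rpow he₀ he₁ n :=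
  fun _ _ hab => Real.rpow_le_rpow (abv.nonneg _) (h hab) he₀.le

end AbsoluteValue

section PadeSum

variable {K : Type*} [Field K]

/-- The inner sum over `h` in the paper's `b_{l,μ,j}`, with `σ_i = P.coeff i`, `M = ml` and
`a = α_j`. -/
def padeInnerSum (P : K[X]) (a : K) (M μ N : ℕ) : K :=
  ∑ h ∈ range (min M N + 1),
    P.coeff (M - h) * (((N - h)! : K) / ((M - h + μ)! : K)) * a ^ (N - h)

/-- `b_{l,μ,j} = (ml + μ)! * padeSum (∏ i, (C (α i) - X) ^ l) (α j) (m * l) μ`. -/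
def padeSum (P : K[X]) (a : K) (M μ : ℕ) : K :=
  ∑ N ∈ range (M + μ), padeInnerSum P a M μ N

variable {abv : AbsoluteValue K ℝ}

theorem abv_factorial_div_factorial_le_one (hmono : Monotone fun n : ℕ => abv (n : K))
    {a b : ℕ} (hab : a ≤ b) : abv ((a ! : K) / (b ! : K)) ≤ 1 := by
  rw [map_div₀]
  exact div_le_one_of_le₀ (hmono (factorial_le hab)) (abv.nonneg _)

theorem abv_padeInnerSum_le (hmono : Monotone fun n : ℕ => abv (n : K)) {P : K[X]} {Q : ℝ[X]}
    (hPQ : IsMajorant abv P Q) (a : K) {M μ N : ℕ} (hN : N ≤ 2 * M) (hNμ : N < M + μ) :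
    abv (padeInnerSum P a M μ N) ≤ max 1 (abv a) ^ M * Q.eval (max 1 (abv a)) := by
  set A := max 1 (abv a)
  have hA : 1 ≤ A := le_max_left _ _
  have hterm : ∀ h ∈ range (min M N + 1),
      abv (P.coeff (M - h) * (((N - h)! : K) / ((M - h + μ)! : K)) * a ^ (N - h))
        ≤ A ^ M * (abv (P.coeff (M - h)) * A ^ (M - h)) := by
    intro h hh
    have hh : h ≤ min M N := Nat.lt_succ_iff.1 (mem_range.1 hh)
    have hratio : abv (((N - h)! : K) / ((M - h + μ)! : K)) ≤ 1 :=
      abv_factorial_div_factorial_le_one hmono (by omega)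
    have hpow : abv a ^ (N - h) ≤ A ^ (M - h + M) :=
      (pow_le_pow_left₀ (abv.nonneg _) (le_max_right _ _) _).trans
        (pow_le_pow_right₀ hA (by omega))
    calc _ = abv (P.coeff (M - h)) * abv (((N - h)! : K) / ((M - h + μ)! : K)) *
          abv a ^ (N - h) := by rw [map_mul, map_mul, map_pow]
      _ ≤ abv (P.coeff (M - h)) * 1 * A ^ (M - h + M) := by gcongr
      _ = A ^ M * (abv (P.coeff (M - h)) * A ^ (M - h)) := by ring
  calc abv (padeInnerSum P a M μ N)
      ≤ ∑ h ∈ range (min M N + 1), A ^ M * (abv (P.coeff (M - h)) * A ^ (M - h)) :=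
        (abv.sum_le _ _).trans (sum_le_sum hterm)
    _ ≤ ∑ h ∈ range (M + 1), A ^ M * (abv (P.coeff (M - h)) * A ^ (M - h)) :=
        sum_le_sum_of_subset_of_nonneg (range_subset_range.2 (by omega)) fun _ _ _ => by positivity
    _ = A ^ M * ∑ k ∈ range (M + 1), abv (P.coeff k) * A ^ k := by
        rw [← mul_sum, ← sum_range_reflect]
        refine congrArg _ (sum_congr rfl fun k hk => ?_)
        rw [add_tsub_cancel_right, Nat.sub_sub_self (Nat.lt_succ_iff.1 (mem_range.1 hk))]
    _ ≤ A ^ M * Q.eval A := by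
        gcongr
        exact hPQ.sum_mul_pow_le_eval _ (zero_le_one.trans hA)

theorem abv_padeSum_le (hmono : Monotone fun n : ℕ => abv (n : K)) {P : K[X]} {Q : ℝ[X]}
    (hPQ : IsMajorant abv P Q) (a : K) {M μ : ℕ} (hμ : μ ≤ M) :
    abv (padeSum P a M μ) ≤ (M + μ) * (max 1 (abv a) ^ M * Q.eval (max 1 (abv a))) := by
  refine (abv.sum_le _ _).trans ?_
  simpa using sum_le_card_nsmul _ _ _ fun N hN =>
    have hN := mem_range.1 hN
    abv_padeInnerSum_le hmono hPQ a (by omega) hN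

theorem abv_factorial_mul_padeSum_le (hmono : Monotone fun n : ℕ => abv (n : K)) {m : ℕ}
    (α : Fin m → K) {l μ : ℕ} (hl : 1 ≤ l) (hμ : μ ≤ m) (j : Fin m) :
    abv (((m * l + μ)! : K) * padeSum (∏ i, (C (α i) - X) ^ l) (α j) (m * l) μ)
      ≤ abv (((m * l + μ)! : ℕ) : K) * (max 1 (abv (α j))) ^ (m * l) *
          ((m * l + m : ℕ) : ℝ) * ∏ i, (abv (α i) + max 1 (abv (α j))) ^ l := by
  have hmaj : IsMajorant abv (∏ i, (C (α i) - X) ^ l) (∏ i, (C (abv (α i)) + X) ^ l) :=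
    IsMajorant.prod _ fun i _ => (isMajorant_C_sub_X (α i)).pow l
  have hm : m ≤ m * l := Nat.le_mul_of_pos_right m hl
  have hbound := abv_padeSum_le hmono hmaj (α j) (hμ.trans hm)
  simp only [eval_prod, eval_pow, eval_add, eval_C, eval_X] at hbound
  rw [map_mul, mul_assoc, mul_assoc]
  gcongr
  calc _ ≤ _ := hbound
    _ ≤ ((m * l + m : ℕ) : ℝ) * ((max 1 (abv (α j))) ^ (m * l) *
          ∏ i, (abv (α i) + max 1 (abv (α j))) ^ l) := by
      gcongr
      exact_mod_cast Nat.add_le_add_left hμ _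
    _ = _ := by ring

end PadeSum

namespace NumberField.InfinitePlace

variable {K : Type*} [Field K] [NumberField K]

theorem mult_div_finrank_pos_s18 (v : InfinitePlace K) :
    0 < (v.mult : ℝ) / (Module.finrank ℚ K : ℝ) := by
  have : 0 < Module.finrank ℚ K := Module.finrank_pos
  have := v.mult_pos
  positivity

theorem mult_div_finrank_le_one_s18 (v : InfinitePlace K) :
    (v.mult : ℝ) / (Module.finrank ℚ K : ℝ) ≤ 1 := by
  rw [div_le_one (by exact_mod_cast Module.finrank_pos), ← sum_mult_eq, Nat.cast_le]
  exact single_le_sum (fun w _ => Nat.zero_le (mult w)) (mem_univ v)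

theorem monotone_natCast {K : Type*} [Field K] (v : InfinitePlace K) :
    Monotone fun n : ℕ => v (n : K) := by
  simpa only [InfinitePlace.map_natCast] using Nat.mono_cast

end NumberField.InfinitePlace

/-- with `σ_i` defined by `∏ j, (α j − w)^l = ∑ i, σ i * w^i` and
`b_{l,μ,j} = (ml+μ)! ∑_{N=0}^{ml+μ−1} ∑_{h=0}^{min(ml,N)} σ_{ml−h} ((N−h)!/(ml−h+μ)!) α_j^{N−h}`,
for every Archimedean normalised absolute value `‖·‖_v` of `K` one has
`‖b_{l,μ,j}‖_v ≤ ‖(ml+μ)!‖_v · (max 1 ‖α_j‖_v)^{ml} · (ml+m) · ∏ i, (‖α_i‖_v + max 1 ‖α_j‖_v)^l`. -/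
theorem pade_bj_archimedean_bound {K : Type*} [Field K] [NumberField K]
    {m : ℕ} (α : Fin m → K) (l μ : ℕ) (hl : 1 ≤ l) (hμ : μ ≤ m)
    (σ : ℕ → K)
    (hσ : ∀ i, σ i = (∏ j, (C (α j) - X) ^ l).coeff i)
    (j : Fin m) (v : InfinitePlace K) :
    infNorm K v (((m * l + μ)! : K) *
        ∑ N ∈ range (m * l + μ), ∑ h ∈ range (min (m * l) N + 1),
          σ (m * l - h) * (((N - h)! : K) / ((m * l - h + μ)! : K)) * (α j) ^ (N - h))
      ≤ infNorm K v (((m * l + μ)! : ℕ) : K) *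
          (max 1 (infNorm K v (α j))) ^ (m * l) * ((m * l + m : ℕ) : ℝ) *
          ∏ i, (infNorm K v (α i) + max 1 (infNorm K v (α j))) ^ l := by
  obtain rfl : σ = (∏ j, (C (α j) - X) ^ l).coeff := funext hσ
  exact abv_factorial_mul_padeSum_le
    (AbsoluteValue.monotone_rpow_natCast v.mult_div_finrank_pos_s18 v.mult_div_finrank_le_one_s18
      v.monotone_natCast) α hl hμ j
end
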